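/- arXiv:math/0405145 — 3 statements merged into one kernel-verified Lean document; each statement's English description precedes it below -/
import Mathlib

section
/- Let A and X be perfect weak Hopf algebras over a field k with weak antipodes S_A and S_X respectively, suppose S_A is invertible, and suppose (X, A) is a weak Hopf skew-pair. Then A and X are both biperfect; that is, A and X are both coperfect (in addition to being perfect). -/
noncomputable section

open TensorProduct

/-- The data of a (weak) bialgebra on a `k`-vector space `H`:
multiplication, unit, comultiplication and counit, all as linear maps. -/
structure BialgData (k : Type) [Field k] (H : Type) [AddCommGroup H] [Module k H] where
  mul : H ⊗[k] H →ₗ[k] H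
  one : H
  comul : H →ₗ[k] H ⊗[k] H
  counit : H →ₗ[k] k

namespace BialgData

variable {k : Type} [Field k] {H : Type} [AddCommGroup H] [Module k H]

/-- The axioms making `BialgData` an honest bialgebra. -/
structure IsBialgebra (B : BialgData k H) : Prop where
  mul_assoc : ∀ x y z : H, B.mul (B.mul (x ⊗ₜ y) ⊗ₜ z) = B.mul (x ⊗ₜ B.mul (y ⊗ₜ z))
  one_mul : ∀ x : H, B.mul (B.one ⊗ₜ x) = x
  mul_one : ∀ x : H, B.mul (x ⊗ₜ B.one) = x
  coassoc : ∀ x : H,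
    (TensorProduct.assoc k H H H) ((TensorProduct.map B.comul LinearMap.id) (B.comul x))
      = (TensorProduct.map LinearMap.id B.comul) (B.comul x)
  counit_comul : ∀ x : H,
    (TensorProduct.lid k H) ((TensorProduct.map B.counit LinearMap.id) (B.comul x)) = x
  comul_counit : ∀ x : H,
    (TensorProduct.rid k H) ((TensorProduct.map LinearMap.id B.counit) (B.comul x)) = x
  comul_mul : ∀ x y : H,
    B.comul (B.mul (x ⊗ₜ y)) =
      (TensorProduct.map B.mul B.mul)
        ((TensorProduct.tensorTensorTensorComm k H H H H) (B.comul x ⊗ₜ B.comul y))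
  comul_one : B.comul B.one = B.one ⊗ₜ B.one
  counit_mul : ∀ x y : H, B.counit (B.mul (x ⊗ₜ y)) = B.counit x * B.counit y
  counit_one : B.counit B.one = 1

/-- Convolution product of linear endomorphisms: `f ∗ g = mul ∘ (f ⊗ g) ∘ comul`. -/
def conv (B : BialgData k H) (f g : H →ₗ[k] H) : H →ₗ[k] H :=
  B.mul ∘ₗ TensorProduct.map f g ∘ₗ B.comul

/-- `T` is a weak antipode: `id ∗ T ∗ id = id` and `T ∗ id ∗ T = T`. -/
def IsWeakAntipode (B : BialgData k H) (T : H →ₗ[k] H) : Prop :=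
  B.conv (B.conv LinearMap.id T) LinearMap.id = LinearMap.id ∧
    B.conv (B.conv T LinearMap.id) T = T

/-- `T` is an anti-bialgebra morphism: `T(xy) = T(y)T(x)`, `T(1) = 1`,
`Δ(T x) = Σ T(x'') ⊗ T(x')` and `ε ∘ T = ε`. -/
def IsAntiBialgebraHom (B : BialgData k H) (T : H →ₗ[k] H) : Prop :=
  (∀ x y : H, T (B.mul (x ⊗ₜ y)) = B.mul (T y ⊗ₜ T x)) ∧
  T B.one = B.one ∧
  (∀ x : H, B.comul (T x) =
    (TensorProduct.comm k H H) ((TensorProduct.map T T) (B.comul x))) ∧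
  ∀ x : H, B.counit (T x) = B.counit x

/-- `H` is perfect: `T` is an anti-bialgebra morphism and `(id ∗ T)(H) ⊆ C(H)`,
i.e. `Σ x'T(x'')` is central for every `x`. -/
def Perfect (B : BialgData k H) (T : H →ₗ[k] H) : Prop :=
  B.IsAntiBialgebraHom T ∧
    ∀ x y : H,
      B.mul ((B.conv LinearMap.id T) x ⊗ₜ y) = B.mul (y ⊗ₜ (B.conv LinearMap.id T) x)

/-- `H` is coperfect: `T` is an anti-bialgebra morphism and
`Σ x'T(x'') ⊗ x''' = Σ x''T(x''') ⊗ x'` for every `x`. -/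
def Coperfect (B : BialgData k H) (T : H →ₗ[k] H) : Prop :=
  B.IsAntiBialgebraHom T ∧
    ∀ x : H,
      (TensorProduct.map (B.conv LinearMap.id T) LinearMap.id) (B.comul x)
        = (TensorProduct.comm k H H)
            ((TensorProduct.map LinearMap.id (B.conv LinearMap.id T)) (B.comul x))

/-- `H` is biperfect: perfect and coperfect. -/
def Biperfect (B : BialgData k H) (T : H →ₗ[k] H) : Prop :=
  B.Perfect T ∧ B.Coperfect T

/-- The opposite bialgebra `H^op`: same coalgebra, opposite multiplication. -/
def op (B : BialgData k H) : BialgData k H :=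
  { B with mul := B.mul ∘ₗ (TensorProduct.comm k H H).toLinearMap }

/-- The co-opposite bialgebra `H^cop`: same algebra, opposite comultiplication. -/
def cop (B : BialgData k H) : BialgData k H :=
  { B with comul := (TensorProduct.comm k H H).toLinearMap ∘ₗ B.comul }

/-- `H` is commutative. -/
def Commutative (B : BialgData k H) : Prop :=
  ∀ x y : H, B.mul (x ⊗ₜ y) = B.mul (y ⊗ₜ x)

/-- `H` is cocommutative. -/
def Cocommutative (B : BialgData k H) : Prop :=
  ∀ x : H, (TensorProduct.comm k H H) (B.comul x) = B.comul x

/-- The dual weak Hopf algebra structure on `H* = Module.Dual k H` (for `H` finite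
dimensional): convolution multiplication `(fg)(x) = Σ f(x')g(x'')`, unit `ε`,
comultiplication dual to the multiplication of `H`, counit `f ↦ f 1`. -/
def dual (B : BialgData k H) [FiniteDimensional k H] :
    BialgData k (Module.Dual k H) where
  mul := B.comul.dualMap ∘ₗ TensorProduct.dualDistrib k H H
  one := B.counit
  comul := ((TensorProduct.dualDistribEquiv k H H).symm :
      Module.Dual k (H ⊗[k] H) →ₗ[k] Module.Dual k H ⊗[k] Module.Dual k H) ∘ₗ
    B.mul.dualMap
  counit := Module.Dual.eval k H B.one

section Reshuffle

variable (k)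
variable (M N P : Type) [AddCommGroup M] [AddCommGroup N] [AddCommGroup P]
  [Module k M] [Module k N] [Module k P]

/-- `(u ⊗ v) ⊗ w ↦ (u ⊗ w) ⊗ v`. -/
def swap23 : (M ⊗[k] N) ⊗[k] P →ₗ[k] (M ⊗[k] P) ⊗[k] N :=
  ((TensorProduct.assoc k M P N).symm : M ⊗[k] (P ⊗[k] N) →ₗ[k] (M ⊗[k] P) ⊗[k] N) ∘ₗ
    (TensorProduct.map LinearMap.id ((TensorProduct.comm k N P) : N ⊗[k] P →ₗ[k] P ⊗[k] N)) ∘ₗ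
      ((TensorProduct.assoc k M N P) : (M ⊗[k] N) ⊗[k] P →ₗ[k] M ⊗[k] (N ⊗[k] P))

/-- `(u ⊗ v) ⊗ w ↦ (w ⊗ u) ⊗ v`. -/
def rot3 : (M ⊗[k] N) ⊗[k] P →ₗ[k] (P ⊗[k] M) ⊗[k] N :=
  ((TensorProduct.assoc k P M N).symm : P ⊗[k] (M ⊗[k] N) →ₗ[k] (P ⊗[k] M) ⊗[k] N) ∘ₗ
    ((TensorProduct.comm k (M ⊗[k] N) P) : (M ⊗[k] N) ⊗[k] P →ₗ[k] P ⊗[k] (M ⊗[k] N))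

end Reshuffle

/-- The iterated comultiplication `x ↦ (x' ⊗ x'') ⊗ x'''`. -/
def comul2 (B : BialgData k H) : H →ₗ[k] (H ⊗[k] H) ⊗[k] H :=
  (TensorProduct.map B.comul LinearMap.id) ∘ₗ B.comul

/-- The convolution multiplication on `H*`: `(fg)(x) = Σ f(x') g(x'')`. -/
def dualMul (B : BialgData k H) :
    Module.Dual k H ⊗[k] Module.Dual k H →ₗ[k] Module.Dual k H :=
  B.comul.dualMap ∘ₗ TensorProduct.dualDistrib k H H

/-- The comultiplication on `H*` dual to the multiplication of `H`. -/
def dualComul (B : BialgData k H) [FiniteDimensional k H] :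
    Module.Dual k H →ₗ[k] Module.Dual k H ⊗[k] Module.Dual k H :=
  ((TensorProduct.dualDistribEquiv k H H).symm :
      Module.Dual k (H ⊗[k] H) →ₗ[k] Module.Dual k H ⊗[k] Module.Dual k H) ∘ₗ
    B.mul.dualMap

/-- `u ⊗ v ↦ (x ↦ T⁻¹(u) · x · v)`, where `Tinv = T⁻¹`. -/
def conjLin (B : BialgData k H) (Tinv : H →ₗ[k] H) : H ⊗[k] H →ₗ[k] (H →ₗ[k] H) :=
  TensorProduct.lift
    ((((LinearMap.llcomp k H H H) ∘ₗ (TensorProduct.curry B.mul).flip).compl₂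
        ((TensorProduct.curry B.mul) ∘ₗ Tinv)).flip)

/-- `g ⊗ (u ⊗ v) ↦ g(T⁻¹(u) · ? · v)`. -/
def dualConj (B : BialgData k H) (Tinv : H →ₗ[k] H) :
    Module.Dual k H ⊗[k] (H ⊗[k] H) →ₗ[k] Module.Dual k H :=
  (TensorProduct.lift (LinearMap.llcomp k H H k)) ∘ₗ
    (TensorProduct.map LinearMap.id (B.conjLin Tinv))

/-- `a ↦ (a''' ⊗ a') ⊗ a''`. -/
def comul2rot (B : BialgData k H) : H →ₗ[k] (H ⊗[k] H) ⊗[k] H :=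
  (BialgData.rot3 k H H H) ∘ₗ B.comul2

/-- The multiplication of the quantum double `D(H) = H^{*cop} ∞ H`:
`(f ∞ a)(g ∞ b) = Σ f · g(T⁻¹(a''') ? a') ∞ a'' b`. -/
def doubleMul (B : BialgData k H) (Tinv : H →ₗ[k] H) :
    (Module.Dual k H ⊗[k] H) ⊗[k] (Module.Dual k H ⊗[k] H) →ₗ[k]
      Module.Dual k H ⊗[k] H :=
  (TensorProduct.map (B.dualMul) B.mul) ∘ₗ
  (TensorProduct.map ((TensorProduct.comm k (Module.Dual k H) (Module.Dual k H)) :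
      Module.Dual k H ⊗[k] Module.Dual k H →ₗ[k] Module.Dual k H ⊗[k] Module.Dual k H)
    (LinearMap.id : H ⊗[k] H →ₗ[k] H ⊗[k] H)) ∘ₗ
  ((TensorProduct.tensorTensorTensorComm k (Module.Dual k H) H (Module.Dual k H) H) :
    (Module.Dual k H ⊗[k] H) ⊗[k] (Module.Dual k H ⊗[k] H) →ₗ[k]
      (Module.Dual k H ⊗[k] Module.Dual k H) ⊗[k] (H ⊗[k] H)) ∘ₗ
  (TensorProduct.map
    ((TensorProduct.map (B.dualConj Tinv) LinearMap.id) ∘ₗ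
      ((TensorProduct.assoc k (Module.Dual k H) (H ⊗[k] H) H).symm :
        Module.Dual k H ⊗[k] ((H ⊗[k] H) ⊗[k] H) →ₗ[k]
          (Module.Dual k H ⊗[k] (H ⊗[k] H)) ⊗[k] H))
    (LinearMap.id : Module.Dual k H ⊗[k] H →ₗ[k] Module.Dual k H ⊗[k] H)) ∘ₗ
  ((TensorProduct.tensorTensorTensorComm k (Module.Dual k H) (Module.Dual k H)
      ((H ⊗[k] H) ⊗[k] H) H) :
    (Module.Dual k H ⊗[k] Module.Dual k H) ⊗[k] (((H ⊗[k] H) ⊗[k] H) ⊗[k] H) →ₗ[k]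
      (Module.Dual k H ⊗[k] ((H ⊗[k] H) ⊗[k] H)) ⊗[k] (Module.Dual k H ⊗[k] H)) ∘ₗ
  (TensorProduct.map (LinearMap.id : Module.Dual k H ⊗[k] Module.Dual k H →ₗ[k]
      Module.Dual k H ⊗[k] Module.Dual k H)
    (TensorProduct.map B.comul2rot (LinearMap.id : H →ₗ[k] H))) ∘ₗ
  (TensorProduct.map ((TensorProduct.comm k (Module.Dual k H) (Module.Dual k H)) :
      Module.Dual k H ⊗[k] Module.Dual k H →ₗ[k] Module.Dual k H ⊗[k] Module.Dual k H)
    (LinearMap.id : H ⊗[k] H →ₗ[k] H ⊗[k] H)) ∘ₗ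
  ((TensorProduct.tensorTensorTensorComm k (Module.Dual k H) H (Module.Dual k H) H) :
    (Module.Dual k H ⊗[k] H) ⊗[k] (Module.Dual k H ⊗[k] H) →ₗ[k]
      (Module.Dual k H ⊗[k] Module.Dual k H) ⊗[k] (H ⊗[k] H))

/-- The comultiplication of the quantum double `D(H) = H^{*cop} ∞ H`, using the
coproduct of `H^{*cop}` on the first factor. -/
def doubleComul (B : BialgData k H) [FiniteDimensional k H] :
    Module.Dual k H ⊗[k] H →ₗ[k]
      (Module.Dual k H ⊗[k] H) ⊗[k] (Module.Dual k H ⊗[k] H) :=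
  ((TensorProduct.tensorTensorTensorComm k (Module.Dual k H) (Module.Dual k H) H H) :
      (Module.Dual k H ⊗[k] Module.Dual k H) ⊗[k] (H ⊗[k] H) →ₗ[k]
        (Module.Dual k H ⊗[k] H) ⊗[k] (Module.Dual k H ⊗[k] H)) ∘ₗ
    (TensorProduct.map
      (((TensorProduct.comm k (Module.Dual k H) (Module.Dual k H)) :
          Module.Dual k H ⊗[k] Module.Dual k H →ₗ[k]
            Module.Dual k H ⊗[k] Module.Dual k H) ∘ₗ B.dualComul)
      B.comul)

/-- The unit `ε ∞ 1` of the quantum double. -/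
def doubleOne (B : BialgData k H) : Module.Dual k H ⊗[k] H :=
  B.counit ⊗ₜ B.one

/-- Componentwise multiplication on `D(H) ⊗ D(H)`. -/
def doubleMul2 (B : BialgData k H) (Tinv : H →ₗ[k] H) :
    ((Module.Dual k H ⊗[k] H) ⊗[k] (Module.Dual k H ⊗[k] H)) ⊗[k]
        ((Module.Dual k H ⊗[k] H) ⊗[k] (Module.Dual k H ⊗[k] H)) →ₗ[k]
      (Module.Dual k H ⊗[k] H) ⊗[k] (Module.Dual k H ⊗[k] H) :=
  (TensorProduct.map (B.doubleMul Tinv) (B.doubleMul Tinv)) ∘ₗ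
    ((TensorProduct.tensorTensorTensorComm k (Module.Dual k H ⊗[k] H)
        (Module.Dual k H ⊗[k] H) (Module.Dual k H ⊗[k] H) (Module.Dual k H ⊗[k] H)) :
      ((Module.Dual k H ⊗[k] H) ⊗[k] (Module.Dual k H ⊗[k] H)) ⊗[k]
          ((Module.Dual k H ⊗[k] H) ⊗[k] (Module.Dual k H ⊗[k] H)) →ₗ[k]
        ((Module.Dual k H ⊗[k] H) ⊗[k] (Module.Dual k H ⊗[k] H)) ⊗[k]
          ((Module.Dual k H ⊗[k] H) ⊗[k] (Module.Dual k H ⊗[k] H)))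

/-- Componentwise multiplication on `D(H) ⊗ D(H) ⊗ D(H)` (associated to the left). -/
def doubleMul3 (B : BialgData k H) (Tinv : H →ₗ[k] H) :
    (((Module.Dual k H ⊗[k] H) ⊗[k] (Module.Dual k H ⊗[k] H)) ⊗[k]
          (Module.Dual k H ⊗[k] H)) ⊗[k]
        (((Module.Dual k H ⊗[k] H) ⊗[k] (Module.Dual k H ⊗[k] H)) ⊗[k]
          (Module.Dual k H ⊗[k] H)) →ₗ[k]
      ((Module.Dual k H ⊗[k] H) ⊗[k] (Module.Dual k H ⊗[k] H)) ⊗[k]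
        (Module.Dual k H ⊗[k] H) :=
  (TensorProduct.map (B.doubleMul2 Tinv) (B.doubleMul Tinv)) ∘ₗ
    ((TensorProduct.tensorTensorTensorComm k
        ((Module.Dual k H ⊗[k] H) ⊗[k] (Module.Dual k H ⊗[k] H)) (Module.Dual k H ⊗[k] H)
        ((Module.Dual k H ⊗[k] H) ⊗[k] (Module.Dual k H ⊗[k] H)) (Module.Dual k H ⊗[k] H)) :
      (((Module.Dual k H ⊗[k] H) ⊗[k] (Module.Dual k H ⊗[k] H)) ⊗[k]
            (Module.Dual k H ⊗[k] H)) ⊗[k]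
          (((Module.Dual k H ⊗[k] H) ⊗[k] (Module.Dual k H ⊗[k] H)) ⊗[k]
            (Module.Dual k H ⊗[k] H)) →ₗ[k]
        (((Module.Dual k H ⊗[k] H) ⊗[k] (Module.Dual k H ⊗[k] H)) ⊗[k]
            ((Module.Dual k H ⊗[k] H) ⊗[k] (Module.Dual k H ⊗[k] H))) ⊗[k]
          ((Module.Dual k H ⊗[k] H) ⊗[k] (Module.Dual k H ⊗[k] H)))

end BialgData

section Pairing

open BialgData

variable {k : Type} [Field k] {X A : Type}
  [AddCommGroup X] [Module k X] [AddCommGroup A] [Module k A]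

/-- A weak Hopf pair `(X, A)`: a nondegenerate bilinear form `⟨·,·⟩ : X × A → k`
satisfying `⟨x, ab⟩ = Σ ⟨x', a⟩⟨x'', b⟩`, `⟨x, 1⟩ = ε(x)`,
`⟨xy, a⟩ = Σ ⟨x, a'⟩⟨y, a''⟩`, `⟨1, a⟩ = ε(a)` and `⟨S_X x, a⟩ = ⟨x, S_A a⟩`. -/
structure IsWeakHopfPair (BX : BialgData k X) (BA : BialgData k A)
    (SX : X →ₗ[k] X) (SA : A →ₗ[k] A) (p : X →ₗ[k] A →ₗ[k] k) : Prop where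
  nondegen_left : ∀ x : X, (∀ a : A, p x a = 0) → x = 0
  nondegen_right : ∀ a : A, (∀ x : X, p x a = 0) → a = 0
  pair_mul_right : ∀ (x : X) (a b : A),
    p x (BA.mul (a ⊗ₜ b)) =
      (TensorProduct.lid k k) ((TensorProduct.map (p.flip a) (p.flip b)) (BX.comul x))
  pair_one_right : ∀ x : X, p x BA.one = BX.counit x
  pair_mul_left : ∀ (x y : X) (a : A),
    p (BX.mul (x ⊗ₜ y)) a =
      (TensorProduct.lid k k) ((TensorProduct.map (p x) (p y)) (BA.comul a))
  pair_one_left : ∀ a : A, p BX.one a = BA.counit a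
  pair_antipode : ∀ (x : X) (a : A), p (SX x) a = p x (SA a)

/-- A weak Hopf skew-pair `(X, A)` (with `S_A` invertible, with inverse `SAinv`):
as a weak Hopf pair but with `⟨x, ab⟩ = Σ ⟨x'', a⟩⟨x', b⟩` and
`⟨S_X x, a⟩ = ⟨x, S_A⁻¹ a⟩`. -/
structure IsWeakHopfSkewPair (BX : BialgData k X) (BA : BialgData k A)
    (SX : X →ₗ[k] X) (SAinv : A →ₗ[k] A) (p : X →ₗ[k] A →ₗ[k] k) : Prop where
  nondegen_left : ∀ x : X, (∀ a : A, p x a = 0) → x = 0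
  nondegen_right : ∀ a : A, (∀ x : X, p x a = 0) → a = 0
  pair_mul_right : ∀ (x : X) (a b : A),
    p x (BA.mul (a ⊗ₜ b)) =
      (TensorProduct.lid k k) ((TensorProduct.map (p.flip b) (p.flip a)) (BX.comul x))
  pair_one_right : ∀ x : X, p x BA.one = BX.counit x
  pair_mul_left : ∀ (x y : X) (a : A),
    p (BX.mul (x ⊗ₜ y)) a =
      (TensorProduct.lid k k) ((TensorProduct.map (p x) (p y)) (BA.comul a))
  pair_one_left : ∀ a : A, p BX.one a = BA.counit a
  pair_antipode : ∀ (x : X) (a : A), p (SX x) a = p x (SAinv a)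

variable (BX : BialgData k X) (BA : BialgData k A)
  (SX : X →ₗ[k] X) (SAinv : A →ₗ[k] A) (p : X →ₗ[k] A →ₗ[k] k)

/-- Auxiliary map `x ↦ Σ ⟨x' · S_X(x'''), ·⟩ ⊗ x'' ∈ A* ⊗ X`. -/
def lactAux : X →ₗ[k] Module.Dual k A ⊗[k] X :=
  (TensorProduct.map (p ∘ₗ BX.mul ∘ₗ TensorProduct.map LinearMap.id SX) LinearMap.id) ∘ₗ
    (BialgData.swap23 k X X X) ∘ₗ BX.comul2

/-- The left action `a ▷ x = Σ ⟨x' · S_X(x'''), a⟩ x''` of `A` on `X`,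
as a linear map `A ⊗ X → X`. -/
def lact : A ⊗[k] X →ₗ[k] X :=
  ((TensorProduct.lid k X) : k ⊗[k] X →ₗ[k] X) ∘ₗ
    (TensorProduct.map (contractLeft k A) LinearMap.id) ∘ₗ
      (TensorProduct.map ((TensorProduct.comm k A (Module.Dual k A)) :
          A ⊗[k] Module.Dual k A →ₗ[k] Module.Dual k A ⊗[k] A) LinearMap.id) ∘ₗ
        ((TensorProduct.assoc k A (Module.Dual k A) X).symm :
          A ⊗[k] (Module.Dual k A ⊗[k] X) →ₗ[k] (A ⊗[k] Module.Dual k A) ⊗[k] X) ∘ₗ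
          (TensorProduct.map LinearMap.id (lactAux BX SX p))

/-- Auxiliary map `a ↦ Σ ⟨·, S_A⁻¹(a''') · a'⟩ ⊗ a'' ∈ X* ⊗ A`. -/
def ractAux : A →ₗ[k] Module.Dual k X ⊗[k] A :=
  (TensorProduct.map (p.flip ∘ₗ BA.mul ∘ₗ TensorProduct.map SAinv LinearMap.id)
      LinearMap.id) ∘ₗ
    (BialgData.rot3 k A A A) ∘ₗ BA.comul2

/-- The right action `a ◁ x = Σ ⟨x, S_A⁻¹(a''') a'⟩ a''` of `X` on `A`,
as a linear map `A ⊗ X → A`. -/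
def ract : A ⊗[k] X →ₗ[k] A :=
  ((TensorProduct.lid k A) : k ⊗[k] A →ₗ[k] A) ∘ₗ
    (TensorProduct.map (contractLeft k X) LinearMap.id) ∘ₗ
      (BialgData.swap23 k (Module.Dual k X) A X) ∘ₗ
        (TensorProduct.map (ractAux BA SAinv p) LinearMap.id)

end Pairing

/-! The skew pairing makes `id ∗ S_X` adjoint to `(id ∗ S_A) ∘ S_A⁻¹`:
`⟨Σ x' S_X(x''), a⟩ = ⟨x, Σ S_A⁻¹(a'') a'⟩`. Since the multiplication on each side of the pairing
is dual to the comultiplication on the other, nondegeneracy turns centrality of the values of one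
of these maps (perfectness) into the identity `Σ f(v') ⊗ v'' = Σ f(v'') ⊗ v'` for its adjoint `f`.
This is coperfectness of `X` directly, and of `A` after precomposing with the anti-coalgebra
automorphism `S_A⁻¹`. -/

namespace TensorProduct

variable {k V W : Type*} [Field k] [AddCommGroup V] [Module k V] [AddCommGroup W] [Module k W]

theorem lid_map_comm (f : Module.Dual k V) (g : Module.Dual k W) (t : W ⊗[k] V) :
    TensorProduct.lid k k (map f g (TensorProduct.comm k W V t)) =
      TensorProduct.lid k k (map g f t) := by
  induction t with
  | zero => simp
  | tmul w v => simp [mul_comm]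
  | add t t' ht ht' => simp only [map_add, ht, ht']

theorem apply_lid_rTensor (f : Module.Dual k V) (g : Module.Dual k W) (t : V ⊗[k] W) :
    g (TensorProduct.lid k W (f.rTensor W t)) = TensorProduct.lid k k (map f g t) := by
  induction t with
  | zero => simp
  | tmul v w => simp
  | add t t' ht ht' => simp only [map_add, ht, ht']

theorem apply_rid_lTensor (f : Module.Dual k V) (g : Module.Dual k W) (t : V ⊗[k] W) :
    f (TensorProduct.rid k V (g.lTensor V t)) = TensorProduct.lid k k (map f g t) := by
  induction t with
  | zero => simp
  | tmul v w => simp [mul_comm]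
  | add t t' ht ht' => simp only [map_add, ht, ht']

theorem lid_map₂_tmul_right (q : V →ₗ[k] W →ₗ[k] k) (t : V ⊗[k] V) (a b : W) :
    TensorProduct.lid k k (map₂ q q t (a ⊗ₜ b)) =
      TensorProduct.lid k k (map (q.flip a) (q.flip b) t) := by
  induction t with
  | zero => simp
  | tmul x y => simp
  | add t t' ht ht' => simp only [map_add, LinearMap.add_apply, ht, ht']

theorem eq_zero_of_forall_lid_map_eq_zero {G H : Type*} (Φ : G → Module.Dual k V)
    (Ψ : H → Module.Dual k W) (hΦ : ∀ v, (∀ e, Φ e v = 0) → v = 0)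
    (hΨ : ∀ w, (∀ f, Ψ f w = 0) → w = 0) (t : V ⊗[k] W)
    (ht : ∀ e f, TensorProduct.lid k k (map (Φ e) (Ψ f) t) = 0) : t = 0 := by
  classical
  have hΨt : ∀ f, TensorProduct.rid k V ((Ψ f).lTensor V t) = 0 := fun f =>
    hΦ _ fun e => (apply_rid_lTensor _ _ t).trans (ht e f)
  let b := Module.Basis.ofVectorSpace k V
  refine (equivFinsuppOfBasisLeft b).map_eq_zero_iff.mp (Finsupp.ext fun i => ?_)
  rw [equivFinsuppOfBasisLeft_apply, Finsupp.coe_zero, Pi.zero_apply]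
  refine hΨ _ fun f => ?_
  rw [apply_lid_rTensor, ← apply_rid_lTensor, hΨt f, map_zero]

end TensorProduct

section Cocentral

variable {k V W : Type*} [Field k] [AddCommGroup V] [Module k V] [AddCommGroup W] [Module k W]

def IsCocentral (Δ : V →ₗ[k] V ⊗[k] V) (f : V →ₗ[k] V) : Prop :=
  ∀ v, map f LinearMap.id (Δ v) = TensorProduct.comm k V V (map LinearMap.id f (Δ v))

def HasCentralRange (m : W ⊗[k] W →ₗ[k] W) (g : W →ₗ[k] W) : Prop :=
  ∀ w w', m (g w ⊗ₜ w') = m (w' ⊗ₜ g w)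

theorem isCocentral_of_adjoint (Δ : V →ₗ[k] V ⊗[k] V) (m : W ⊗[k] W →ₗ[k] W)
    (q : V →ₗ[k] W →ₗ[k] k) (hq : ∀ v, (∀ w, q v w = 0) → v = 0)
    (hmul : ∀ v w₁ w₂,
      q v (m (w₁ ⊗ₜ w₂)) = TensorProduct.lid k k (map (q.flip w₁) (q.flip w₂) (Δ v)))
    {f : V →ₗ[k] V} {g : W →ₗ[k] W} (hfg : ∀ v w, q (f v) w = q v (g w))
    (hg : HasCentralRange m g) : IsCocentral Δ f := by
  have hflip : ∀ w, q.flip w ∘ₗ f = q.flip (g w) := fun w => LinearMap.ext fun v => hfg v w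
  intro v
  rw [← sub_eq_zero]
  refine TensorProduct.eq_zero_of_forall_lid_map_eq_zero q.flip q.flip hq hq _ fun w₁ w₂ => ?_
  rw [map_sub, map_sub, sub_eq_zero, lid_map_comm, map_map, map_map]
  simp only [LinearMap.comp_id, hflip]
  rw [← hmul, ← hmul, hg]

theorem IsCocentral.of_comp {Δ : V →ₗ[k] V ⊗[k] V} {f T : V →ₗ[k] V}
    (hT : ∀ v, Δ (T v) = TensorProduct.comm k V V (map T T (Δ v)))
    (hT_surj : Function.Surjective T) (h : IsCocentral Δ (f ∘ₗ T)) : IsCocentral Δ f := by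
  intro v
  obtain ⟨u, rfl⟩ := hT_surj v
  have hu := congrArg (map LinearMap.id T) (h u)
  rw [map_map, map_comm, map_map] at hu
  rw [hT, map_comm, map_map, map_comm, map_map]
  simp only [LinearMap.id_comp, LinearMap.comp_id, comm_comm] at hu ⊢
  exact hu.symm

end Cocentral

namespace BialgData

variable {k H : Type} [Field k] [AddCommGroup H] [Module k H]

theorem comul_apply_of_inverse {B : BialgData k H} {T T' : H →ₗ[k] H}
    (hT : ∀ x, B.comul (T x) = TensorProduct.comm k H H (map T T (B.comul x)))
    (h₁ : T' ∘ₗ T = LinearMap.id) (h₂ : T ∘ₗ T' = LinearMap.id) (x : H) :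
    B.comul (T' x) = TensorProduct.comm k H H (map T' T' (B.comul x)) := by
  have hx := hT (T' x)
  rw [← LinearMap.comp_apply T, h₂, LinearMap.id_apply] at hx
  rw [hx, map_comm, comm_comm, map_map, h₁, map_id, LinearMap.id_apply]

theorem conv_id_apply_of_inverse {B : BialgData k H} {T T' : H →ₗ[k] H}
    (hT' : ∀ x, B.comul (T' x) = TensorProduct.comm k H H (map T' T' (B.comul x)))
    (h₂ : T ∘ₗ T' = LinearMap.id) (x : H) :
    B.conv LinearMap.id T (T' x) =
      B.mul (map T' LinearMap.id (TensorProduct.comm k H H (B.comul x))) := by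
  rw [conv, LinearMap.comp_apply, LinearMap.comp_apply, hT', map_comm, map_map, h₂,
    LinearMap.id_comp, ← map_comm]

end BialgData

namespace IsWeakHopfSkewPair

variable {k X A : Type} [Field k] [AddCommGroup X] [Module k X] [AddCommGroup A] [Module k A]
  {BX : BialgData k X} {BA : BialgData k A} {SX : X →ₗ[k] X} {SAinv : A →ₗ[k] A}
  {p : X →ₗ[k] A →ₗ[k] k}

theorem pair_mul_left_tensor (hp : IsWeakHopfSkewPair BX BA SX SAinv p) (t : X ⊗[k] X) (a : A) :
    p (BX.mul t) a = TensorProduct.lid k k (map₂ p p t (BA.comul a)) := by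
  induction t with
  | zero => simp
  | tmul x y => exact hp.pair_mul_left x y a
  | add t t' ht ht' => simp only [map_add, LinearMap.add_apply, ht, ht']

theorem pair_mul_right_tensor (hp : IsWeakHopfSkewPair BX BA SX SAinv p) (x : X)
    (s : A ⊗[k] A) :
    p x (BA.mul s) =
      TensorProduct.lid k k (map₂ p p (BX.comul x) (TensorProduct.comm k A A s)) := by
  induction s with
  | zero => simp
  | tmul a b =>
    rw [hp.pair_mul_right, TensorProduct.comm_tmul, TensorProduct.lid_map₂_tmul_right]
  | add s s' hs hs' => simp only [map_add, hs, hs']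

theorem lid_map₂_map_antipode (hp : IsWeakHopfSkewPair BX BA SX SAinv p) (u : X ⊗[k] X)
    (s : A ⊗[k] A) :
    TensorProduct.lid k k (map₂ p p (map LinearMap.id SX u) s) =
      TensorProduct.lid k k (map₂ p p u (map LinearMap.id SAinv s)) := by
  induction u with
  | zero => simp
  | tmul x y =>
    induction s with
    | zero => simp
    | tmul a b => simp [hp.pair_antipode]
    | add s s' hs hs' => simp only [map_add, hs, hs']
  | add u u' hu hu' => simp only [map_add, LinearMap.add_apply, hu, hu']

theorem pair_conv_id_antipode (hp : IsWeakHopfSkewPair BX BA SX SAinv p) {SA : A →ₗ[k] A}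
    (hSAinv : ∀ a, BA.comul (SAinv a) = TensorProduct.comm k A A (map SAinv SAinv (BA.comul a)))
    (hinv : SA ∘ₗ SAinv = LinearMap.id) (x : X) (a : A) :
    p (BX.conv LinearMap.id SX x) a = p x (BA.conv LinearMap.id SA (SAinv a)) := by
  rw [BialgData.conv_id_apply_of_inverse hSAinv hinv, BialgData.conv, LinearMap.comp_apply,
    LinearMap.comp_apply, hp.pair_mul_left_tensor, hp.lid_map₂_map_antipode,
    hp.pair_mul_right_tensor, map_comm, comm_comm]

end IsWeakHopfSkewPair

theorem skewPair_biperfect_general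
    {k : Type} [Field k] {X A : Type}
    [AddCommGroup X] [Module k X] [AddCommGroup A] [Module k A]
    (BX : BialgData k X) (BA : BialgData k A)
    (SX : X →ₗ[k] X) (SA SAinv : A →ₗ[k] A)
    (hinv₁ : SAinv ∘ₗ SA = LinearMap.id) (hinv₂ : SA ∘ₗ SAinv = LinearMap.id)
    (hpX : BX.Perfect SX) (hpA : BA.Perfect SA)
    (p : X →ₗ[k] A →ₗ[k] k)
    (hp : IsWeakHopfSkewPair BX BA SX SAinv p) :
    BA.Biperfect SA ∧ BX.Biperfect SX := by
  have hSAinv_comul := BA.comul_apply_of_inverse hpA.1.2.2.1 hinv₁ hinv₂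
  have hadj := hp.pair_conv_id_antipode hSAinv_comul hinv₂
  have hcopA : IsCocentral BA.comul (BA.conv LinearMap.id SA) :=
    (isCocentral_of_adjoint BA.comul BX.mul p.flip hp.nondegen_right
      (fun a x y => hp.pair_mul_left x y a) (fun a x => (hadj x a).symm) hpX.2).of_comp
      hSAinv_comul (Function.LeftInverse.surjective (LinearMap.congr_fun hinv₁))
  -- The skew pairing makes the multiplication of `A^op` dual to the comultiplication of `X`.
  have hcopX : IsCocentral BX.comul (BX.conv LinearMap.id SX) :=
    isCocentral_of_adjoint (g := BA.conv LinearMap.id SA ∘ₗ SAinv) BX.comul BA.op.mul p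
      hp.nondegen_left (fun x a b => hp.pair_mul_right x b a) hadj
      fun a b => (hpA.2 (SAinv a) b).symm
  exact ⟨⟨hpA, hpA.1, hcopA⟩, ⟨hpX, hpX.1, hcopX⟩⟩

/-- if `A` and `X` are perfect weak Hopf algebras with weak antipodes
`S_A` (invertible) and `S_X`, and `(X, A)` is a weak Hopf skew-pair, then `A` and
`X` are both biperfect. -/
theorem skewPair_biperfect
    {k : Type} [Field k] {X A : Type}
    [AddCommGroup X] [Module k X] [AddCommGroup A] [Module k A]
    (BX : BialgData k X) (BA : BialgData k A)
    (SX : X →ₗ[k] X) (SA SAinv : A →ₗ[k] A)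
    (hX : BX.IsBialgebra) (hA : BA.IsBialgebra)
    (hSX : BX.IsWeakAntipode SX) (hSA : BA.IsWeakAntipode SA)
    (hinv₁ : SAinv ∘ₗ SA = LinearMap.id) (hinv₂ : SA ∘ₗ SAinv = LinearMap.id)
    (hpX : BX.Perfect SX) (hpA : BA.Perfect SA)
    (p : X →ₗ[k] A →ₗ[k] k)
    (hp : IsWeakHopfSkewPair BX BA SX SAinv p) :
    BA.Biperfect SA ∧ BX.Biperfect SX :=
  skewPair_biperfect_general BX BA SX SA SAinv hinv₁ hinv₂ hpX hpA p hp
end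
end

section
/- Let A and X be perfect weak Hopf algebras over a field k with weak antipodes S_A (invertible) and S_X, and let (X, A) be a weak Hopf skew-pair. Define a ▷ x = Σ_{(x)} ⟨x'S_X(x'''), a⟩ x'' and a ◁ x = Σ_{(a)} ⟨x, S_A^{-1}(a''')a'⟩ a''. Then for all a, b ∈ A and x, y ∈ X: ⟨a ▷ x, b⟩ = Σ_{(a)} ⟨x, S_A^{-1}(a'') b a'⟩ and ⟨y, a ◁ x⟩ = Σ_{(x)} ⟨x' y S_X(x''), a⟩. -/
noncomputable section

open TensorProduct

section Proof9

open TensorProduct BialgData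

variable {k : Type} [Field k]

/-- Tensor product of two functionals. -/
def dp {M N : Type} [AddCommGroup M] [Module k M] [AddCommGroup N] [Module k N]
    (φ : M →ₗ[k] k) (ψ : N →ₗ[k] k) : M ⊗[k] N →ₗ[k] k :=
  (TensorProduct.lid k k).toLinearMap ∘ₗ TensorProduct.map φ ψ

@[simp] lemma dp_tmul {M N : Type} [AddCommGroup M] [Module k M] [AddCommGroup N]
    [Module k N] (φ : M →ₗ[k] k) (ψ : N →ₗ[k] k) (m : M) (n : N) :
    dp φ ψ (m ⊗ₜ n) = φ m * ψ n := by
  simp [dp, smul_eq_mul]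

lemma dp_add_left {M N : Type} [AddCommGroup M] [Module k M] [AddCommGroup N]
    [Module k N] (φ φ' : M →ₗ[k] k) (ψ : N →ₗ[k] k) :
    dp (φ + φ') ψ = dp φ ψ + dp φ' ψ := by
  apply TensorProduct.ext'; intro m n; simp [add_mul]

lemma dp_smul_left {M N : Type} [AddCommGroup M] [Module k M] [AddCommGroup N]
    [Module k N] (c : k) (φ : M →ₗ[k] k) (ψ : N →ₗ[k] k) :
    dp (c • φ) ψ = c • dp φ ψ := by
  apply TensorProduct.ext'; intro m n; simp [smul_eq_mul, mul_assoc]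

lemma dp_add_right {M N : Type} [AddCommGroup M] [Module k M] [AddCommGroup N]
    [Module k N] (φ : M →ₗ[k] k) (ψ ψ' : N →ₗ[k] k) :
    dp φ (ψ + ψ') = dp φ ψ + dp φ ψ' := by
  apply TensorProduct.ext'; intro m n; simp [mul_add]

lemma dp_smul_right {M N : Type} [AddCommGroup M] [Module k M] [AddCommGroup N]
    [Module k N] (c : k) (φ : M →ₗ[k] k) (ψ : N →ₗ[k] k) :
    dp φ (c • ψ) = c • dp φ ψ := by
  apply TensorProduct.ext'; intro m n
  simp [smul_eq_mul]; ring

variable {X A : Type} [AddCommGroup X] [Module k X] [AddCommGroup A] [Module k A]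

/-- `(a1 ⊗ a2) ↦ ((x1 ⊗ x2) ⊗ x3 ↦ ⟨x1,a1⟩⟨x2,b⟩⟨x3,S⁻¹a2⟩)`. -/
def Phi1 (p : X →ₗ[k] A →ₗ[k] k) (SAinv : A →ₗ[k] A) (b : A) :
    (A ⊗[k] A) →ₗ[k] ((X ⊗[k] X) ⊗[k] X) →ₗ[k] k :=
  TensorProduct.lift (LinearMap.mk₂ k
    (fun a1 a2 => dp (dp (p.flip a1) (p.flip b)) (p.flip (SAinv a2)))
    (fun a1 a1' a2 => by simp only [map_add, dp_add_left])
    (fun c a1 a2 => by simp only [map_smul, dp_smul_left])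
    (fun a1 a2 a2' => by simp only [map_add, dp_add_right])
    (fun c a1 a2 => by simp only [map_smul, dp_smul_right]))

@[simp] lemma Phi1_tmul (p : X →ₗ[k] A →ₗ[k] k) (SAinv : A →ₗ[k] A) (b a1 a2 : A)
    (x1 x2 x3 : X) :
    Phi1 p SAinv b (a1 ⊗ₜ a2) ((x1 ⊗ₜ x2) ⊗ₜ x3)
      = p x1 a1 * p x2 b * p x3 (SAinv a2) := by
  simp [Phi1]

/-- `(x1 ⊗ x2) ↦ ((a1 ⊗ a2) ⊗ a3 ↦ ⟨x1,a1⟩⟨y,a2⟩⟨x2,S⁻¹a3⟩)`. -/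
def Phi2 (p : X →ₗ[k] A →ₗ[k] k) (SAinv : A →ₗ[k] A) (y : X) :
    (X ⊗[k] X) →ₗ[k] ((A ⊗[k] A) ⊗[k] A) →ₗ[k] k :=
  TensorProduct.lift (LinearMap.mk₂ k
    (fun x1 x2 => dp (dp (p x1) (p y)) ((p x2) ∘ₗ SAinv))
    (fun x1 x1' x2 => by simp only [map_add, dp_add_left])
    (fun c x1 x2 => by simp only [map_smul, dp_smul_left])
    (fun x1 x2 x2' => by simp only [map_add, LinearMap.add_comp, dp_add_right])
    (fun c x1 x2 => by simp only [map_smul, LinearMap.smul_comp, dp_smul_right]))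

@[simp] lemma Phi2_tmul (p : X →ₗ[k] A →ₗ[k] k) (SAinv : A →ₗ[k] A) (y x1 x2 : X)
    (a1 a2 a3 : A) :
    Phi2 p SAinv y (x1 ⊗ₜ x2) ((a1 ⊗ₜ a2) ⊗ₜ a3)
      = p x1 a1 * p y a2 * p x2 (SAinv a3) := by
  simp [Phi2]

@[simp] lemma swap23_tmul (M N P : Type) [AddCommGroup M] [AddCommGroup N]
    [AddCommGroup P] [Module k M] [Module k N] [Module k P] (m : M) (n : N) (q : P) :
    BialgData.swap23 k M N P ((m ⊗ₜ n) ⊗ₜ q) = (m ⊗ₜ q) ⊗ₜ n := by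
  simp [BialgData.swap23]

@[simp] lemma rot3_tmul (M N P : Type) [AddCommGroup M] [AddCommGroup N]
    [AddCommGroup P] [Module k M] [Module k N] [Module k P] (m : M) (n : N) (q : P) :
    BialgData.rot3 k M N P ((m ⊗ₜ n) ⊗ₜ q) = (q ⊗ₜ m) ⊗ₜ n := by
  simp [BialgData.rot3]

end Proof9

section Proof9Main

open TensorProduct BialgData

variable {k : Type} [Field k] {X A : Type}
  [AddCommGroup X] [Module k X] [AddCommGroup A] [Module k A]
  (BX : BialgData k X) (BA : BialgData k A)
  (SX : X →ₗ[k] X) (SAinv : A →ₗ[k] A) (p : X →ₗ[k] A →ₗ[k] k)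

lemma lact_pair (hp : IsWeakHopfSkewPair BX BA SX SAinv p) (a b : A) (x : X) :
    p (lact BX SX p (a ⊗ₜ x)) b = Phi1 p SAinv b (BA.comul a) (BX.comul2 x) := by
  simp only [lact, lactAux, LinearMap.coe_comp, LinearEquiv.coe_coe, Function.comp_apply,
    TensorProduct.map_tmul, LinearMap.id_coe, id_eq]
  generalize BX.comul2 x = t
  induction t using TensorProduct.induction_on with
  | zero => simp
  | add s s' ihs ihs' =>
    simp only [map_add, TensorProduct.tmul_add, LinearMap.add_apply, ihs, ihs']
  | tmul s x3 =>
    induction s using TensorProduct.induction_on with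
    | zero => simp
    | add s1 s2 ih1 ih2 =>
      simp only [map_add, TensorProduct.add_tmul, TensorProduct.tmul_add,
        LinearMap.add_apply, ih1, ih2]
    | tmul x1 x2 =>
      simp only [swap23_tmul, TensorProduct.map_tmul, LinearMap.coe_comp,
        Function.comp_apply, LinearMap.id_coe, id_eq, TensorProduct.assoc_symm_tmul,
        TensorProduct.comm_tmul, contractLeft_apply, TensorProduct.lid_tmul,
        map_smul, LinearMap.smul_apply, smul_eq_mul, LinearEquiv.coe_coe]
      rw [hp.pair_mul_left x1 (SX x3) a]
      generalize BA.comul a = v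
      induction v using TensorProduct.induction_on with
      | zero => simp
      | add v1 v2 ih1 ih2 =>
        simp only [map_add, LinearMap.add_apply, add_mul, mul_add, ih1, ih2]
      | tmul a1 a2 =>
        simp only [TensorProduct.map_tmul, TensorProduct.lid_tmul, smul_eq_mul,
          LinearEquiv.coe_coe, Phi1_tmul]
        rw [hp.pair_antipode x3 a2]
        ring

lemma ract_pair (hp : IsWeakHopfSkewPair BX BA SX SAinv p) (a : A) (x y : X) :
    p y (ract BA SAinv p (a ⊗ₜ x)) = Phi2 p SAinv y (BX.comul x) (BA.comul2 a) := by
  simp only [ract, ractAux, LinearMap.coe_comp, LinearEquiv.coe_coe, Function.comp_apply,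
    TensorProduct.map_tmul, LinearMap.id_coe, id_eq]
  generalize BA.comul2 a = t
  induction t using TensorProduct.induction_on with
  | zero => simp
  | add s s' ihs ihs' =>
    simp only [map_add, TensorProduct.add_tmul, LinearMap.add_apply, ihs, ihs']
  | tmul s a3 =>
    induction s using TensorProduct.induction_on with
    | zero => simp
    | add s1 s2 ih1 ih2 =>
      simp only [map_add, TensorProduct.add_tmul, LinearMap.add_apply, ih1, ih2]
    | tmul a1 a2 =>
      simp only [rot3_tmul, TensorProduct.map_tmul, LinearMap.coe_comp,
        Function.comp_apply, LinearMap.id_coe, id_eq, swap23_tmul,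
        contractLeft_apply, TensorProduct.lid_tmul, LinearMap.flip_apply,
        map_smul, LinearMap.smul_apply, smul_eq_mul, LinearEquiv.coe_coe]
      rw [hp.pair_mul_right x (SAinv a3) a1]
      generalize BX.comul x = u
      induction u using TensorProduct.induction_on with
      | zero => simp
      | add u1 u2 ih1 ih2 =>
        simp only [map_add, LinearMap.add_apply, add_mul, mul_add, ih1, ih2]
      | tmul x1 x2 =>
        simp only [TensorProduct.map_tmul, TensorProduct.lid_tmul, smul_eq_mul,
          LinearEquiv.coe_coe, LinearMap.flip_apply, Phi2_tmul, LinearMap.coe_comp,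
          Function.comp_apply]
        ring

lemma rhs1_eq (hp : IsWeakHopfSkewPair BX BA SX SAinv p) (a b : A) (x : X) :
    p x (BA.mul ((TensorProduct.map
        (BA.mul ∘ₗ ((TensorProduct.mk k A A).flip b) ∘ₗ SAinv) LinearMap.id)
      ((TensorProduct.comm k A A) (BA.comul a))))
    = Phi1 p SAinv b (BA.comul a)
        ((TensorProduct.assoc k X X X).symm
          ((TensorProduct.map LinearMap.id BX.comul) (BX.comul x))) := by
  generalize BA.comul a = v
  induction v using TensorProduct.induction_on with
  | zero => simp
  | add v1 v2 ih1 ih2 =>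
    simp only [map_add, LinearMap.add_apply, ih1, ih2]
  | tmul a1 a2 =>
    simp only [TensorProduct.comm_tmul, TensorProduct.map_tmul, LinearMap.coe_comp,
      Function.comp_apply, TensorProduct.mk_apply, LinearMap.flip_apply,
      LinearMap.id_coe, id_eq, LinearEquiv.coe_coe]
    rw [hp.pair_mul_right x (BA.mul (SAinv a2 ⊗ₜ b)) a1]
    generalize BX.comul x = u
    induction u using TensorProduct.induction_on with
    | zero => simp
    | add u1 u2 ih1 ih2 =>
      simp only [map_add, LinearMap.add_apply, LinearEquiv.map_add, ih1, ih2]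
    | tmul x1 x2 =>
      simp only [TensorProduct.map_tmul, TensorProduct.lid_tmul, smul_eq_mul,
        LinearEquiv.coe_coe, LinearMap.flip_apply, LinearMap.id_coe, id_eq]
      rw [hp.pair_mul_right x2 (SAinv a2) b]
      generalize BX.comul x2 = w
      induction w using TensorProduct.induction_on with
      | zero => simp
      | add w1 w2 ih1 ih2 =>
        simp only [map_add, LinearMap.add_apply, LinearEquiv.map_add,
          TensorProduct.tmul_add, mul_add, add_mul, ih1, ih2]
      | tmul x2' x3 =>
        simp only [TensorProduct.map_tmul, TensorProduct.lid_tmul, smul_eq_mul,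
          LinearEquiv.coe_coe, LinearMap.flip_apply, TensorProduct.assoc_symm_tmul,
          Phi1_tmul]
        ring

lemma rhs2_eq (hp : IsWeakHopfSkewPair BX BA SX SAinv p) (a : A) (x y : X) :
    p (BX.mul ((TensorProduct.map
        (BX.mul ∘ₗ ((TensorProduct.mk k X X).flip y)) SX)
      (BX.comul x))) a
    = Phi2 p SAinv y (BX.comul x) (BA.comul2 a) := by
  have hc : BA.comul2 a = (TensorProduct.map BA.comul LinearMap.id) (BA.comul a) := rfl
  rw [hc]
  generalize BX.comul x = u
  induction u using TensorProduct.induction_on with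
  | zero => simp
  | add u1 u2 ih1 ih2 =>
    simp only [map_add, LinearMap.add_apply, ih1, ih2]
  | tmul x1 x2 =>
    simp only [TensorProduct.map_tmul, LinearMap.coe_comp, Function.comp_apply,
      TensorProduct.mk_apply, LinearMap.flip_apply]
    rw [hp.pair_mul_left (BX.mul (x1 ⊗ₜ y)) (SX x2) a]
    generalize BA.comul a = v
    induction v using TensorProduct.induction_on with
    | zero => simp
    | add v1 v2 ih1 ih2 =>
      simp only [map_add, LinearMap.add_apply, LinearEquiv.map_add, ih1, ih2]
    | tmul c d =>
      simp only [TensorProduct.map_tmul, TensorProduct.lid_tmul, smul_eq_mul,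
        LinearEquiv.coe_coe, LinearMap.id_coe, id_eq]
      rw [hp.pair_mul_left x1 y c, hp.pair_antipode x2 d]
      generalize BA.comul c = w
      induction w using TensorProduct.induction_on with
      | zero => simp
      | add w1 w2 ih1 ih2 =>
        simp only [map_add, LinearMap.add_apply, LinearEquiv.map_add,
          TensorProduct.add_tmul, mul_add, add_mul, ih1, ih2]
      | tmul c1 c2 =>
        simp only [TensorProduct.map_tmul, TensorProduct.lid_tmul, smul_eq_mul,
          LinearEquiv.coe_coe, Phi2_tmul]

end Proof9Main

/-- for a weak Hopf skew-pair `(X, A)` of perfect weak Hopf algebras,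
with `a ▷ x = Σ ⟨x'S_X(x'''), a⟩ x''` and `a ◁ x = Σ ⟨x, S_A⁻¹(a''')a'⟩ a''`, one has
`⟨a ▷ x, b⟩ = Σ ⟨x, S_A⁻¹(a'') b a'⟩` and `⟨y, a ◁ x⟩ = Σ ⟨x' y S_X(x''), a⟩`. -/
theorem skewPair_action_pairings
    {k : Type} [Field k] {X A : Type}
    [AddCommGroup X] [Module k X] [AddCommGroup A] [Module k A]
    (BX : BialgData k X) (BA : BialgData k A)
    (SX : X →ₗ[k] X) (SA SAinv : A →ₗ[k] A)
    (hX : BX.IsBialgebra) (hA : BA.IsBialgebra)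
    (hSX : BX.IsWeakAntipode SX) (hSA : BA.IsWeakAntipode SA)
    (hinv₁ : SAinv ∘ₗ SA = LinearMap.id) (hinv₂ : SA ∘ₗ SAinv = LinearMap.id)
    (hpX : BX.Perfect SX) (hpA : BA.Perfect SA)
    (p : X →ₗ[k] A →ₗ[k] k)
    (hp : IsWeakHopfSkewPair BX BA SX SAinv p) :
    (∀ (a b : A) (x : X),
      p (lact BX SX p (a ⊗ₜ x)) b =
        p x (BA.mul ((TensorProduct.map
            (BA.mul ∘ₗ ((TensorProduct.mk k A A).flip b) ∘ₗ SAinv) LinearMap.id)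
          ((TensorProduct.comm k A A) (BA.comul a))))) ∧
    (∀ (a : A) (x y : X),
      p y (ract BA SAinv p (a ⊗ₜ x)) =
        p (BX.mul ((TensorProduct.map
            (BX.mul ∘ₗ ((TensorProduct.mk k X X).flip y)) SX)
          (BX.comul x))) a) := by
  constructor
  · intro a b x
    rw [lact_pair BX BA SX SAinv p hp a b x, rhs1_eq BX BA SX SAinv p hp a b x]
    congr 1
    rw [← hX.coassoc x, LinearEquiv.symm_apply_apply]
    rfl
  · intro a x y
    rw [ract_pair BX BA SX SAinv p hp a x y, rhs2_eq BX BA SX SAinv p hp a x y]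
end
end

section
/- Let A and X be perfect weak Hopf algebras over a field k with weak antipodes S_A (invertible) and S_X, let (X, A) be a weak Hopf skew-pair, and define a ▷ x = Σ_{(x)} ⟨x'S_X(x'''), a⟩ x'' and a ◁ x = Σ_{(a)} ⟨x, S_A^{-1}(a''')a'⟩ a''. Then ◁ makes A a right X-module (a ◁ (xy) = (a ◁ x) ◁ y and a ◁ 1_X = a) which is a right X-quasi-module-coalgebra, i.e. Δ(a ◁ x) = Σ_{(a)(x)} (a' ◁ x') ⊗ (a'' ◁ x''); and ▷ makes X a left A-module which is a left A-quasi-module-coalgebra, i.e. Δ(a ▷ x) = Σ_{(a)(x)} (a' ▷ x') ⊗ (a'' ▷ x''). -/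
noncomputable section

open TensorProduct

section SkewPairAux

open TensorProduct

namespace SkewPairAux

variable {k : Type} [Field k]

section Generic

variable {H : Type} [AddCommGroup H] [Module k H]

/-- Left multiplication by `c`. -/
def lmul (B : BialgData k H) (c : H) : H →ₗ[k] H := B.mul ∘ₗ TensorProduct.mk k H H c

@[simp] lemma lmul_apply (B : BialgData k H) (c y : H) :
    lmul B c y = B.mul (c ⊗ₜ y) := rfl

lemma conv_apply (B : BialgData k H) (f g : H →ₗ[k] H) (x : H) :
    B.conv f g x = B.mul (TensorProduct.map f g (B.comul x)) := rfl

@[simp] lemma cop_mul (B : BialgData k H) : (B.cop).mul = B.mul := rfl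
@[simp] lemma cop_one (B : BialgData k H) : (B.cop).one = B.one := rfl
@[simp] lemma cop_counit (B : BialgData k H) : (B.cop).counit = B.counit := rfl
lemma cop_comul (B : BialgData k H) (x : H) :
    (B.cop).comul x = (TensorProduct.comm k H H) (B.comul x) := rfl

/-- naturality of `comm` -/
lemma map_comm_nat {M N P Q : Type} [AddCommGroup M] [Module k M] [AddCommGroup N] [Module k N]
    [AddCommGroup P] [Module k P] [AddCommGroup Q] [Module k Q]
    (f : M →ₗ[k] P) (g : N →ₗ[k] Q) (t : M ⊗[k] N) :
    TensorProduct.map g f ((TensorProduct.comm k M N) t)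
      = (TensorProduct.comm k P Q) (TensorProduct.map f g t) := by
  have : (TensorProduct.map g f) ∘ₗ (TensorProduct.comm k M N).toLinearMap
      = (TensorProduct.comm k P Q).toLinearMap ∘ₗ (TensorProduct.map f g) :=
    TensorProduct.ext' fun m n => by simp
  exact LinearMap.congr_fun this t

/-- naturality of `assoc` -/
lemma map_assoc_nat {M₁ M₂ M₃ N₁ N₂ N₃ : Type}
    [AddCommGroup M₁] [Module k M₁] [AddCommGroup M₂] [Module k M₂]
    [AddCommGroup M₃] [Module k M₃] [AddCommGroup N₁] [Module k N₁]
    [AddCommGroup N₂] [Module k N₂] [AddCommGroup N₃] [Module k N₃]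
    (f : M₁ →ₗ[k] N₁) (g : M₂ →ₗ[k] N₂) (h : M₃ →ₗ[k] N₃) (t : (M₁ ⊗[k] M₂) ⊗[k] M₃) :
    TensorProduct.map f (TensorProduct.map g h) ((TensorProduct.assoc k M₁ M₂ M₃) t)
      = (TensorProduct.assoc k N₁ N₂ N₃) (TensorProduct.map (TensorProduct.map f g) h t) := by
  have : (TensorProduct.map f (TensorProduct.map g h)) ∘ₗ
        (TensorProduct.assoc k M₁ M₂ M₃).toLinearMap
      = (TensorProduct.assoc k N₁ N₂ N₃).toLinearMap ∘ₗ
        (TensorProduct.map (TensorProduct.map f g) h) :=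
    TensorProduct.ext_threefold fun x y z => by simp
  exact LinearMap.congr_fun this t

variable (B : BialgData k H)

/-- pointwise regrouping along coassociativity -/
lemma coassoc_apply (hB : B.IsBialgebra) {M : Type} [AddCommGroup M] [Module k M]
    (Φ : (H ⊗[k] H) ⊗[k] H →ₗ[k] M) (Ψ : H ⊗[k] (H ⊗[k] H) →ₗ[k] M)
    (hpure : ∀ x y z : H, Φ ((x ⊗ₜ y) ⊗ₜ z) = Ψ (x ⊗ₜ (y ⊗ₜ z))) (a : H) :
    Φ ((TensorProduct.map B.comul LinearMap.id) (B.comul a))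
      = Ψ ((TensorProduct.map LinearMap.id B.comul) (B.comul a)) := by
  rw [← hB.coassoc]
  have h : Ψ ∘ₗ (TensorProduct.assoc k H H H).toLinearMap = Φ :=
    TensorProduct.ext_threefold fun x y z => by
      simpa using (hpure x y z).symm
  exact (LinearMap.congr_fun h ((TensorProduct.map B.comul LinearMap.id) (B.comul a))).symm

lemma conv_assoc (hB : B.IsBialgebra) (f g h : H →ₗ[k] H) :
    B.conv (B.conv f g) h = B.conv f (B.conv g h) := by
  apply LinearMap.ext; intro a
  have e1 : B.conv (B.conv f g) h a
      = (B.mul ∘ₗ TensorProduct.map (B.mul ∘ₗ TensorProduct.map f g) h)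
          ((TensorProduct.map B.comul LinearMap.id) (B.comul a)) := by
    have e : TensorProduct.map (B.conv f g) h
        = (TensorProduct.map (B.mul ∘ₗ TensorProduct.map f g) h) ∘ₗ
            (TensorProduct.map B.comul LinearMap.id) :=
      TensorProduct.ext' fun u v => by simp [BialgData.conv]
    rw [conv_apply, e]; rfl
  have e2 : B.conv f (B.conv g h) a
      = (B.mul ∘ₗ TensorProduct.map f (B.mul ∘ₗ TensorProduct.map g h))
          ((TensorProduct.map LinearMap.id B.comul) (B.comul a)) := by
    have e : TensorProduct.map f (B.conv g h)
        = (TensorProduct.map f (B.mul ∘ₗ TensorProduct.map g h)) ∘ₗ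
            (TensorProduct.map LinearMap.id B.comul) :=
      TensorProduct.ext' fun u v => by simp [BialgData.conv]
    rw [conv_apply, e]; rfl
  rw [e1, e2]
  exact coassoc_apply B hB _ _ (fun u v w => by simp [hB.mul_assoc]) a

/-- pull a left multiplication out of the first slot of a convolution -/
lemma conv_lpull (hB : B.IsBialgebra) (c : H) (f g : H →ₗ[k] H) :
    B.conv (lmul B c ∘ₗ f) g = lmul B c ∘ₗ B.conv f g := by
  apply LinearMap.ext; intro a
  have e : B.mul ∘ₗ TensorProduct.map (lmul B c ∘ₗ f) g
      = lmul B c ∘ₗ B.mul ∘ₗ TensorProduct.map f g :=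
    TensorProduct.ext' fun u v => by simp [hB.mul_assoc]
  calc B.conv (lmul B c ∘ₗ f) g a
      = (B.mul ∘ₗ TensorProduct.map (lmul B c ∘ₗ f) g) (B.comul a) := rfl
    _ = (lmul B c ∘ₗ B.mul ∘ₗ TensorProduct.map f g) (B.comul a) := by rw [e]
    _ = lmul B c (B.conv f g a) := rfl

/-- pull a left multiplication past a convolution whose first factor has central values -/
lemma conv_central_pull (hB : B.IsBialgebra) (c : H) (V f : H →ₗ[k] H)
    (hV : ∀ y z : H, B.mul (V y ⊗ₜ z) = B.mul (z ⊗ₜ V y)) :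
    lmul B c ∘ₗ B.conv V f = B.conv V (lmul B c ∘ₗ f) := by
  apply LinearMap.ext; intro a
  have e : lmul B c ∘ₗ B.mul ∘ₗ TensorProduct.map V f
      = B.mul ∘ₗ TensorProduct.map V (lmul B c ∘ₗ f) :=
    TensorProduct.ext' fun u v => by
      have h1 : B.mul (c ⊗ₜ B.mul (V u ⊗ₜ f v)) = B.mul (B.mul (c ⊗ₜ V u) ⊗ₜ f v) :=
        (hB.mul_assoc _ _ _).symm
      have h2 : B.mul (c ⊗ₜ V u) = B.mul (V u ⊗ₜ c) := (hV u c).symm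
      simp only [LinearMap.comp_apply, TensorProduct.map_tmul, lmul_apply, h1, h2,
        hB.mul_assoc, hV u (B.mul (c ⊗ₜ f v))]
  calc lmul B c (B.conv V f a)
      = (lmul B c ∘ₗ B.mul ∘ₗ TensorProduct.map V f) (B.comul a) := rfl
    _ = (B.mul ∘ₗ TensorProduct.map V (lmul B c ∘ₗ f)) (B.comul a) := by rw [e]
    _ = B.conv V (lmul B c ∘ₗ f) a := rfl

/-- `id ∗ (T ∗ id) = id` from `(id ∗ T) ∗ id = id`. -/
lemma conv_id_absorb (hB : B.IsBialgebra) (T : H →ₗ[k] H)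
    (hT : B.conv (B.conv LinearMap.id T) LinearMap.id = LinearMap.id) :
    B.conv LinearMap.id (B.conv T LinearMap.id) = LinearMap.id := by
  rw [← conv_assoc B hB]; exact hT

end Generic

section CopBialg

variable {k : Type} [Field k] {H : Type} [AddCommGroup H] [Module k H]
variable (B : BialgData k H)

lemma cop_comul_eq : (B.cop).comul = (TensorProduct.comm k H H).toLinearMap ∘ₗ B.comul := rfl

lemma cop_isBialgebra (hB : B.IsBialgebra) : (B.cop).IsBialgebra := by
  constructor
  case mul_assoc => exact hB.mul_assoc
  case one_mul => exact hB.one_mul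
  case mul_one => exact hB.mul_one
  case counit_mul => exact hB.counit_mul
  case counit_one => exact hB.counit_one
  case comul_one =>
    show (TensorProduct.comm k H H) (B.comul B.one) = B.one ⊗ₜ B.one
    rw [hB.comul_one]; simp
  case counit_comul =>
    intro x
    have e : ∀ t : H ⊗[k] H,
        (TensorProduct.lid k H) ((TensorProduct.map B.counit LinearMap.id)
          ((TensorProduct.comm k H H) t))
        = (TensorProduct.rid k H) ((TensorProduct.map LinearMap.id B.counit) t) := by
      intro t
      have h : (TensorProduct.lid k H).toLinearMap ∘ₗ
            (TensorProduct.map B.counit LinearMap.id) ∘ₗ (TensorProduct.comm k H H).toLinearMap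
          = (TensorProduct.rid k H).toLinearMap ∘ₗ (TensorProduct.map LinearMap.id B.counit) :=
        TensorProduct.ext' fun u v => by simp
      exact LinearMap.congr_fun h t
    exact (e (B.comul x)).trans (hB.comul_counit x)
  case comul_counit =>
    intro x
    have e : ∀ t : H ⊗[k] H,
        (TensorProduct.rid k H) ((TensorProduct.map LinearMap.id B.counit)
          ((TensorProduct.comm k H H) t))
        = (TensorProduct.lid k H) ((TensorProduct.map B.counit LinearMap.id) t) := by
      intro t
      have h : (TensorProduct.rid k H).toLinearMap ∘ₗ
            (TensorProduct.map LinearMap.id B.counit) ∘ₗ (TensorProduct.comm k H H).toLinearMap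
          = (TensorProduct.lid k H).toLinearMap ∘ₗ (TensorProduct.map B.counit LinearMap.id) :=
        TensorProduct.ext' fun u v => by simp
      exact LinearMap.congr_fun h t
    exact (e (B.comul x)).trans (hB.counit_comul x)
  case comul_mul =>
    intro x y
    have swap : ∀ s t : H ⊗[k] H,
        (TensorProduct.map B.mul B.mul) ((TensorProduct.tensorTensorTensorComm k H H H H)
          (((TensorProduct.comm k H H) s) ⊗ₜ ((TensorProduct.comm k H H) t)))
        = (TensorProduct.comm k H H) ((TensorProduct.map B.mul B.mul)
            ((TensorProduct.tensorTensorTensorComm k H H H H) (s ⊗ₜ t))) := by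
      intro s t
      have h : (TensorProduct.map B.mul B.mul) ∘ₗ
            (TensorProduct.tensorTensorTensorComm k H H H H).toLinearMap ∘ₗ
            (TensorProduct.map (TensorProduct.comm k H H).toLinearMap
              (TensorProduct.comm k H H).toLinearMap)
          = (TensorProduct.comm k H H).toLinearMap ∘ₗ (TensorProduct.map B.mul B.mul) ∘ₗ
            (TensorProduct.tensorTensorTensorComm k H H H H).toLinearMap :=
        TensorProduct.ext_fourfold' fun a b c d => by simp
      have := LinearMap.congr_fun h (s ⊗ₜ t)
      simpa using this
    show (TensorProduct.comm k H H) (B.comul (B.mul (x ⊗ₜ y)))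
        = (TensorProduct.map B.mul B.mul) ((TensorProduct.tensorTensorTensorComm k H H H H)
            (((TensorProduct.comm k H H) (B.comul x)) ⊗ₜ ((TensorProduct.comm k H H) (B.comul y))))
    rw [hB.comul_mul, swap]
  case coassoc =>
    intro x
    have e1 : (TensorProduct.map (B.cop).comul LinearMap.id) ((B.cop).comul x)
        = (TensorProduct.comm k H (H ⊗[k] H))
            ((TensorProduct.map LinearMap.id (B.cop).comul) (B.comul x)) :=
      SkewPairAux.map_comm_nat LinearMap.id (B.cop).comul (B.comul x)
    have e2 : (TensorProduct.map LinearMap.id (B.cop).comul) (B.comul x)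
        = (TensorProduct.map LinearMap.id (TensorProduct.comm k H H).toLinearMap)
            ((TensorProduct.map LinearMap.id B.comul) (B.comul x)) := by
      have h : (TensorProduct.map (LinearMap.id : H →ₗ[k] H) (B.cop).comul)
          = (TensorProduct.map LinearMap.id (TensorProduct.comm k H H).toLinearMap) ∘ₗ
              (TensorProduct.map LinearMap.id B.comul) :=
        TensorProduct.ext' fun u v => by simp [cop_comul_eq]
      exact LinearMap.congr_fun h _
    have e4 : (TensorProduct.map LinearMap.id (B.cop).comul) ((B.cop).comul x)
        = (TensorProduct.map LinearMap.id (TensorProduct.comm k H H).toLinearMap)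
            ((TensorProduct.comm k (H ⊗[k] H) H)
              ((TensorProduct.map B.comul LinearMap.id) (B.comul x))) := by
      have h1 : (TensorProduct.map LinearMap.id (B.cop).comul) ((B.cop).comul x)
          = (TensorProduct.map LinearMap.id (TensorProduct.comm k H H).toLinearMap)
              ((TensorProduct.map LinearMap.id B.comul) ((B.cop).comul x)) := by
        have h : (TensorProduct.map (LinearMap.id : H →ₗ[k] H) (B.cop).comul)
            = (TensorProduct.map LinearMap.id (TensorProduct.comm k H H).toLinearMap) ∘ₗ
                (TensorProduct.map LinearMap.id B.comul) :=
          TensorProduct.ext' fun u v => by simp [cop_comul_eq]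
        exact LinearMap.congr_fun h _
      rw [h1]
      congr 1
      exact SkewPairAux.map_comm_nat B.comul LinearMap.id (B.comul x)
    have key : ∀ t : (H ⊗[k] H) ⊗[k] H,
        (TensorProduct.assoc k H H H) ((TensorProduct.comm k H (H ⊗[k] H))
          ((TensorProduct.map LinearMap.id (TensorProduct.comm k H H).toLinearMap)
            ((TensorProduct.assoc k H H H) t)))
        = (TensorProduct.map LinearMap.id (TensorProduct.comm k H H).toLinearMap)
            ((TensorProduct.comm k (H ⊗[k] H) H) t) := by
      intro t
      have h : (TensorProduct.assoc k H H H).toLinearMap ∘ₗ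
            (TensorProduct.comm k H (H ⊗[k] H)).toLinearMap ∘ₗ
            (TensorProduct.map LinearMap.id (TensorProduct.comm k H H).toLinearMap) ∘ₗ
            (TensorProduct.assoc k H H H).toLinearMap
          = (TensorProduct.map LinearMap.id (TensorProduct.comm k H H).toLinearMap) ∘ₗ
            (TensorProduct.comm k (H ⊗[k] H) H).toLinearMap :=
        TensorProduct.ext_threefold fun a b c => by simp
      exact LinearMap.congr_fun h t
    rw [e1, e2, ← hB.coassoc, e4]
    exact key _
end CopBialg

section Specific

variable {k : Type} [Field k] {H : Type} [AddCommGroup H] [Module k H]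
variable (B : BialgData k H)

/-- `conv f (conv g h)` written over the right-nested double coproduct. -/
lemma conv_nested_right (f g h : H →ₗ[k] H) (a : H) :
    B.conv f (B.conv g h) a
      = (B.mul ∘ₗ TensorProduct.map f (B.mul ∘ₗ TensorProduct.map g h))
          ((TensorProduct.map LinearMap.id B.comul) (B.comul a)) := by
  have e : TensorProduct.map f (B.conv g h)
      = (TensorProduct.map f (B.mul ∘ₗ TensorProduct.map g h)) ∘ₗ
          (TensorProduct.map LinearMap.id B.comul) :=
    TensorProduct.ext' fun u v => by simp [BialgData.conv]
  rw [conv_apply, e]; rfl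

/-- `conv (conv f g) h` written over the left-nested double coproduct. -/
lemma conv_nested_left (f g h : H →ₗ[k] H) (a : H) :
    B.conv (B.conv f g) h a
      = (B.mul ∘ₗ TensorProduct.map (B.mul ∘ₗ TensorProduct.map f g) h)
          ((TensorProduct.map B.comul LinearMap.id) (B.comul a)) := by
  have e : TensorProduct.map (B.conv f g) h
      = (TensorProduct.map (B.mul ∘ₗ TensorProduct.map f g) h) ∘ₗ
          (TensorProduct.map B.comul LinearMap.id) :=
    TensorProduct.ext' fun u v => by simp [BialgData.conv]
  rw [conv_apply, e]; rfl

/-- right-nested double coproduct of the co-opposite, in terms of the original one. -/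
lemma cop_comul3 (a : H) :
    (TensorProduct.map LinearMap.id (B.cop).comul) ((B.cop).comul a)
      = (TensorProduct.map LinearMap.id (TensorProduct.comm k H H).toLinearMap)
          ((TensorProduct.comm k (H ⊗[k] H) H)
            ((TensorProduct.map B.comul LinearMap.id) (B.comul a))) := by
  have h1 : (TensorProduct.map (LinearMap.id : H →ₗ[k] H) (B.cop).comul)
      = (TensorProduct.map LinearMap.id (TensorProduct.comm k H H).toLinearMap) ∘ₗ
          (TensorProduct.map LinearMap.id B.comul) :=
    TensorProduct.ext' fun u v => by simp [cop_comul_eq]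
  rw [LinearMap.congr_fun h1 ((B.cop).comul a)]
  exact congrArg _ (map_comm_nat B.comul LinearMap.id (B.comul a))

end Specific

section ABside

variable {k : Type} [Field k] {A : Type} [AddCommGroup A] [Module k A]
variable (BA : BialgData k A) (SA SAinv : A →ₗ[k] A)

lemma sainv_sa (hinv₁ : SAinv ∘ₗ SA = LinearMap.id) (a : A) : SAinv (SA a) = a :=
  LinearMap.congr_fun hinv₁ a

lemma sa_sainv (hinv₂ : SA ∘ₗ SAinv = LinearMap.id) (a : A) : SA (SAinv a) = a :=
  LinearMap.congr_fun hinv₂ a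

/-- `S⁻¹` is anti-multiplicative. -/
lemma sainv_antimul (hpA : BA.Perfect SA)
    (hinv₁ : SAinv ∘ₗ SA = LinearMap.id) (hinv₂ : SA ∘ₗ SAinv = LinearMap.id)
    (a b : A) :
    SAinv (BA.mul (a ⊗ₜ b)) = BA.mul (SAinv b ⊗ₜ SAinv a) := by
  have h1 : BA.mul (a ⊗ₜ b) = SA (BA.mul (SAinv b ⊗ₜ SAinv a)) := by
    rw [hpA.1.1 (SAinv b) (SAinv a), sa_sainv SA SAinv hinv₂, sa_sainv SA SAinv hinv₂]
  rw [h1, sainv_sa SA SAinv hinv₁]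

lemma sainv_one (hpA : BA.Perfect SA) (hinv₁ : SAinv ∘ₗ SA = LinearMap.id) :
    SAinv BA.one = BA.one := by
  have := sainv_sa SA SAinv hinv₁ BA.one
  rwa [hpA.1.2.1] at this

/-- The map `W : a ↦ Σ a'' S⁻¹(a')`. -/
noncomputable def Wm : A →ₗ[k] A := (BA.cop).conv LinearMap.id SAinv

lemma Wm_eq (hpA : BA.Perfect SA)
    (hinv₁ : SAinv ∘ₗ SA = LinearMap.id) (hinv₂ : SA ∘ₗ SAinv = LinearMap.id) :
    Wm BA SAinv = SAinv ∘ₗ BA.conv LinearMap.id SA := by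
  apply LinearMap.ext; intro a
  have h : BA.mul ∘ₗ (TensorProduct.map LinearMap.id SAinv) ∘ₗ
        (TensorProduct.comm k A A).toLinearMap
      = SAinv ∘ₗ BA.mul ∘ₗ (TensorProduct.map LinearMap.id SA) :=
    TensorProduct.ext' fun u v => by
      simp only [LinearMap.comp_apply, LinearEquiv.coe_coe, TensorProduct.comm_tmul,
        TensorProduct.map_tmul, LinearMap.id_apply]
      rw [sainv_antimul BA SA SAinv hpA hinv₁ hinv₂, sainv_sa SA SAinv hinv₁]
  calc Wm BA SAinv a
      = (BA.mul ∘ₗ (TensorProduct.map LinearMap.id SAinv) ∘ₗ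
          (TensorProduct.comm k A A).toLinearMap) (BA.comul a) := rfl
    _ = (SAinv ∘ₗ BA.mul ∘ₗ (TensorProduct.map LinearMap.id SA)) (BA.comul a) := by rw [h]
    _ = SAinv (BA.conv LinearMap.id SA a) := rfl

lemma Wm_central (hpA : BA.Perfect SA)
    (hinv₁ : SAinv ∘ₗ SA = LinearMap.id) (hinv₂ : SA ∘ₗ SAinv = LinearMap.id)
    (a y : A) :
    BA.mul (Wm BA SAinv a ⊗ₜ y) = BA.mul (y ⊗ₜ Wm BA SAinv a) := by
  have hw : Wm BA SAinv a = SAinv (BA.conv LinearMap.id SA a) :=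
    LinearMap.congr_fun (Wm_eq BA SA SAinv hpA hinv₁ hinv₂) a
  set z := BA.conv LinearMap.id SA a with hz
  calc BA.mul (Wm BA SAinv a ⊗ₜ y)
      = BA.mul (SAinv z ⊗ₜ SAinv (SA y)) := by rw [hw, sainv_sa SA SAinv hinv₁]
    _ = SAinv (BA.mul (SA y ⊗ₜ z)) := (sainv_antimul BA SA SAinv hpA hinv₁ hinv₂ _ _).symm
    _ = SAinv (BA.mul (z ⊗ₜ SA y)) := by rw [← hpA.2 a (SA y)]
    _ = BA.mul (SAinv (SA y) ⊗ₜ SAinv z) := sainv_antimul BA SA SAinv hpA hinv₁ hinv₂ _ _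
    _ = BA.mul (y ⊗ₜ Wm BA SAinv a) := by rw [hw, sainv_sa SA SAinv hinv₁]

/-- The key collapse `Σ S⁻¹(a''') a'' S⁻¹(a') = S⁻¹(a)`. -/
lemma cvr_collapse (hSA : BA.IsWeakAntipode SA) (hpA : BA.Perfect SA)
    (hinv₁ : SAinv ∘ₗ SA = LinearMap.id) (hinv₂ : SA ∘ₗ SAinv = LinearMap.id) :
    (BA.cop).conv SAinv ((BA.cop).conv LinearMap.id SAinv) = SAinv := by
  apply LinearMap.ext; intro a
  rw [conv_nested_right (BA.cop), cop_comul3]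
  have hR : SAinv a = SAinv ((BA.conv (BA.conv LinearMap.id SA) LinearMap.id) a) := by
    rw [hSA.1]; rfl
  rw [hR, conv_nested_left BA]
  have key : ((BA.cop).mul ∘ₗ TensorProduct.map SAinv
        ((BA.cop).mul ∘ₗ TensorProduct.map LinearMap.id SAinv)) ∘ₗ
        (TensorProduct.map LinearMap.id (TensorProduct.comm k A A).toLinearMap) ∘ₗ
        (TensorProduct.comm k (A ⊗[k] A) A).toLinearMap
      = SAinv ∘ₗ (BA.mul ∘ₗ TensorProduct.map
          (BA.mul ∘ₗ TensorProduct.map LinearMap.id SA) LinearMap.id) :=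
    TensorProduct.ext_threefold fun α β γ => by
      simp only [LinearMap.comp_apply, LinearEquiv.coe_coe, TensorProduct.comm_tmul,
        TensorProduct.map_tmul, LinearMap.id_apply, cop_mul]
      rw [sainv_antimul BA SA SAinv hpA hinv₁ hinv₂,
        sainv_antimul BA SA SAinv hpA hinv₁ hinv₂, sainv_sa SA SAinv hinv₁]
  exact LinearMap.congr_fun key ((TensorProduct.map BA.comul LinearMap.id) (BA.comul a))

end ABside

section Xside

variable {k : Type} [Field k] {X A : Type}
  [AddCommGroup X] [Module k X] [AddCommGroup A] [Module k A]
variable (BX : BialgData k X) (BA : BialgData k A)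
  (SX : X →ₗ[k] X) (SA SAinv : A →ₗ[k] A) (p : X →ₗ[k] A →ₗ[k] k)

lemma sx_injective (hinv₁ : SAinv ∘ₗ SA = LinearMap.id)
    (hp : IsWeakHopfSkewPair BX BA SX SAinv p) :
    Function.Injective SX := by
  intro x y h
  have hd : ∀ a : A, p (x - y) a = 0 := by
    intro a
    have h1 : p (SX (x - y)) (SA a) = p (x - y) (SAinv (SA a)) := hp.pair_antipode _ _
    rw [map_sub, h, sub_self] at h1
    rw [sainv_sa SA SAinv hinv₁] at h1
    simpa using h1.symm
  have := hp.nondegen_left _ hd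
  exact sub_eq_zero.mp this

/-- `S(v(b)) = z(S b)` where `v = conv S id` and `z = conv id S`. -/
lemma sx_vx (hpX : BX.Perfect SX) (b : X) :
    SX (BX.conv SX LinearMap.id b) = BX.conv LinearMap.id SX (SX b) := by
  have h : SX ∘ₗ (BX.mul ∘ₗ TensorProduct.map SX LinearMap.id)
      = (BX.mul ∘ₗ TensorProduct.map LinearMap.id SX) ∘ₗ
          (TensorProduct.comm k X X).toLinearMap ∘ₗ (TensorProduct.map SX SX) :=
    TensorProduct.ext' fun u v => by
      simp only [LinearMap.comp_apply, TensorProduct.map_tmul, LinearMap.id_apply,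
        LinearEquiv.coe_coe, TensorProduct.comm_tmul]
      exact hpX.1.1 (SX u) v
  calc SX (BX.conv SX LinearMap.id b)
      = (SX ∘ₗ (BX.mul ∘ₗ TensorProduct.map SX LinearMap.id)) (BX.comul b) := rfl
    _ = ((BX.mul ∘ₗ TensorProduct.map LinearMap.id SX) ∘ₗ
          (TensorProduct.comm k X X).toLinearMap ∘ₗ (TensorProduct.map SX SX))
            (BX.comul b) := by rw [h]
    _ = BX.mul ((TensorProduct.map LinearMap.id SX)
          ((TensorProduct.comm k X X) ((TensorProduct.map SX SX) (BX.comul b)))) := rfl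
    _ = BX.mul ((TensorProduct.map LinearMap.id SX) (BX.comul (SX b))) := by
          rw [← hpX.1.2.2.1 b]
    _ = BX.conv LinearMap.id SX (SX b) := rfl

/-- `v(b) = Σ S(b') b''` is central. -/
lemma vx_central (hpX : BX.Perfect SX) (hinv₁ : SAinv ∘ₗ SA = LinearMap.id)
    (hp : IsWeakHopfSkewPair BX BA SX SAinv p) (b y : X) :
    BX.mul (BX.conv SX LinearMap.id b ⊗ₜ y) = BX.mul (y ⊗ₜ BX.conv SX LinearMap.id b) := by
  apply sx_injective BX BA SX SA SAinv p hinv₁ hp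
  set v := BX.conv SX LinearMap.id b with hv
  calc SX (BX.mul (v ⊗ₜ y))
      = BX.mul (SX y ⊗ₜ SX v) := hpX.1.1 v y
    _ = BX.mul (SX y ⊗ₜ BX.conv LinearMap.id SX (SX b)) := by
        rw [hv, sx_vx BX SX hpX b]
    _ = BX.mul (BX.conv LinearMap.id SX (SX b) ⊗ₜ SX y) := (hpX.2 (SX b) (SX y)).symm
    _ = BX.mul (SX v ⊗ₜ SX y) := by rw [hv, sx_vx BX SX hpX b]
    _ = SX (BX.mul (y ⊗ₜ v)) := (hpX.1.1 y v).symm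

end Xside

section MainIdentities

variable {k : Type} [Field k] {X A : Type}
  [AddCommGroup X] [Module k X] [AddCommGroup A] [Module k A]
variable (BX : BialgData k X) (BA : BialgData k A)
  (SX : X →ₗ[k] X) (SA SAinv : A →ₗ[k] A) (p : X →ₗ[k] A →ₗ[k] k)

/-- `adX1 u : x ↦ Σ x' (u S(x''))`. -/
noncomputable def adX1 (u : X) : X →ₗ[k] X :=
  BX.conv LinearMap.id (lmul BX u ∘ₗ SX)

/-- `adX2 u v : x ↦ Σ x' (u (v S(x'')))`. -/
noncomputable def adX2 (u v : X) : X →ₗ[k] X :=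
  BX.conv LinearMap.id (lmul BX u ∘ₗ lmul BX v ∘ₗ SX)

/-- `Ua c : a ↦ Σ S⁻¹(a'') (c a')`. -/
noncomputable def Ua (c : A) : A →ₗ[k] A :=
  (BA.cop).conv SAinv (lmul (BA.cop) c)

/-- `Ua2 b c : a ↦ Σ S⁻¹(a'') (c (b a'))`. -/
noncomputable def Ua2 (b c : A) : A →ₗ[k] A :=
  (BA.cop).conv SAinv (lmul (BA.cop) c ∘ₗ lmul (BA.cop) b)

/-- pull a left multiplication out of the first slot (plain version) -/
lemma conv_lpull' {H : Type} [AddCommGroup H] [Module k H] (B : BialgData k H)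
    (hB : B.IsBialgebra) (c : H) (g : H →ₗ[k] H) :
    B.conv (lmul B c) g = lmul B c ∘ₗ B.conv LinearMap.id g := by
  have := conv_lpull B hB c LinearMap.id g
  rwa [LinearMap.comp_id] at this

/-- Main identity for the right action direction: `(id∗uS)∗(id∗vS) = id∗uvS`. -/
lemma main_X (hX : BX.IsBialgebra) (hSX : BX.IsWeakAntipode SX) (hpX : BX.Perfect SX)
    (hinv₁ : SAinv ∘ₗ SA = LinearMap.id)
    (hp : IsWeakHopfSkewPair BX BA SX SAinv p) (u v : X) :
    BX.conv (adX1 BX SX u) (adX1 BX SX v) = adX2 BX SX u v := by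
  unfold adX1 adX2
  rw [conv_assoc BX hX,
    conv_lpull BX hX u SX (BX.conv LinearMap.id (lmul BX v ∘ₗ SX)),
    ← conv_assoc BX hX SX LinearMap.id (lmul BX v ∘ₗ SX),
    conv_central_pull BX hX u (BX.conv SX LinearMap.id) (lmul BX v ∘ₗ SX)
      (fun y z => vx_central BX BA SX SA SAinv p hpX hinv₁ hp y z),
    ← conv_assoc BX hX LinearMap.id (BX.conv SX LinearMap.id),
    conv_id_absorb BX hX SX hSX.1]

/-- Main identity for the left action direction. -/
lemma main_A (hA : BA.IsBialgebra) (hSA : BA.IsWeakAntipode SA) (hpA : BA.Perfect SA)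
    (hinv₁ : SAinv ∘ₗ SA = LinearMap.id) (hinv₂ : SA ∘ₗ SAinv = LinearMap.id)
    (b c : A) :
    (BA.cop).conv (Ua BA SAinv c) (Ua BA SAinv b) = Ua2 BA SAinv b c := by
  have hA' : (BA.cop).IsBialgebra := cop_isBialgebra BA hA
  unfold Ua Ua2
  rw [conv_assoc (BA.cop) hA',
    conv_lpull' (BA.cop) hA' c ((BA.cop).conv SAinv (lmul (BA.cop) b)),
    ← conv_assoc (BA.cop) hA' LinearMap.id SAinv (lmul (BA.cop) b),
    conv_central_pull (BA.cop) hA' c ((BA.cop).conv LinearMap.id SAinv) (lmul (BA.cop) b)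
      (fun y z => Wm_central BA SA SAinv hpA hinv₁ hinv₂ y z),
    ← conv_assoc (BA.cop) hA' SAinv ((BA.cop).conv LinearMap.id SAinv),
    cvr_collapse BA SA SAinv hSA hpA hinv₁ hinv₂]

/-- unit laws -/
lemma adX1_one (hX : BX.IsBialgebra) (hpX : BX.Perfect SX) (u : X) :
    adX1 BX SX u BX.one = u := by
  unfold adX1
  rw [conv_apply, hX.comul_one]
  simp only [TensorProduct.map_tmul, LinearMap.id_apply, LinearMap.comp_apply, lmul_apply]
  rw [hpX.1.2.1, hX.mul_one, hX.one_mul]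

lemma Ua_one (hA : BA.IsBialgebra) (hpA : BA.Perfect SA)
    (hinv₁ : SAinv ∘ₗ SA = LinearMap.id) (c : A) :
    Ua BA SAinv c BA.one = c := by
  unfold Ua
  rw [conv_apply]
  have h1 : (BA.cop).comul BA.one = BA.one ⊗ₜ BA.one := by
    show (TensorProduct.comm k A A) (BA.comul BA.one) = _
    rw [hA.comul_one]; simp
  rw [h1]
  simp only [TensorProduct.map_tmul, lmul_apply, cop_mul]
  rw [sainv_one BA SA SAinv hpA hinv₁, hA.mul_one, hA.one_mul]

/-- module law for the `X`-side words. -/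
lemma adX1_mul (hX : BX.IsBialgebra) (hpX : BX.Perfect SX) (u : X) (x y : X) :
    adX1 BX SX u (BX.mul (x ⊗ₜ y)) = adX1 BX SX (adX1 BX SX u y) x := by
  unfold adX1
  rw [conv_apply, hX.comul_mul, conv_apply, conv_apply]
  have key : ∀ s t : X ⊗[k] X,
      BX.mul ((TensorProduct.map LinearMap.id (lmul BX u ∘ₗ SX))
        ((TensorProduct.map BX.mul BX.mul)
          ((TensorProduct.tensorTensorTensorComm k X X X X) (s ⊗ₜ t))))
      = BX.mul ((TensorProduct.map LinearMap.id
          (lmul BX (BX.mul ((TensorProduct.map LinearMap.id (lmul BX u ∘ₗ SX)) t)) ∘ₗ SX)) s) := by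
    intro s
    induction s using TensorProduct.induction_on with
    | zero => intro t; simp [TensorProduct.zero_tmul]
    | add s₁ s₂ ih₁ ih₂ =>
      intro t
      simp only [TensorProduct.add_tmul, map_add, ih₁ t, ih₂ t]
    | tmul x₁ x₂ =>
      intro t
      simp only [TensorProduct.map_tmul, LinearMap.comp_apply, LinearMap.id_apply, lmul_apply]
      induction t using TensorProduct.induction_on with
      | zero => simp [TensorProduct.tmul_zero]
      | add t₁ t₂ ih₁ ih₂ =>
        simp only [TensorProduct.tmul_add, map_add, TensorProduct.add_tmul, ih₁, ih₂]
      | tmul y₁ y₂ =>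
        simp only [TensorProduct.tensorTensorTensorComm_tmul, TensorProduct.map_tmul,
          LinearMap.comp_apply, LinearMap.id_apply, lmul_apply]
        rw [hpX.1.1 x₂ y₂]
        simp only [hX.mul_assoc]
  exact key (BX.comul x) (BX.comul y)

/-- module law for the `A`-side words. -/
lemma Ua_mul (hA : BA.IsBialgebra) (hpA : BA.Perfect SA)
    (hinv₁ : SAinv ∘ₗ SA = LinearMap.id) (hinv₂ : SA ∘ₗ SAinv = LinearMap.id)
    (c : A) (a b : A) :
    Ua BA SAinv c (BA.mul (a ⊗ₜ b)) = Ua BA SAinv (Ua BA SAinv c a) b := by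
  have hA' : (BA.cop).IsBialgebra := cop_isBialgebra BA hA
  unfold Ua
  rw [conv_apply]
  have hmm : (BA.cop).comul ((BA.cop).mul (a ⊗ₜ b))
      = (TensorProduct.map (BA.cop).mul (BA.cop).mul)
          ((TensorProduct.tensorTensorTensorComm k A A A A)
            ((BA.cop).comul a ⊗ₜ (BA.cop).comul b)) := hA'.comul_mul a b
  rw [show BA.mul (a ⊗ₜ b) = (BA.cop).mul (a ⊗ₜ b) from rfl, hmm, conv_apply, conv_apply]
  have key : ∀ t s : A ⊗[k] A,
      (BA.cop).mul ((TensorProduct.map SAinv (lmul (BA.cop) c))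
        ((TensorProduct.map (BA.cop).mul (BA.cop).mul)
          ((TensorProduct.tensorTensorTensorComm k A A A A) (s ⊗ₜ t))))
      = (BA.cop).mul ((TensorProduct.map SAinv
          (lmul (BA.cop) ((BA.cop).mul ((TensorProduct.map SAinv (lmul (BA.cop) c)) s)))) t) := by
    intro t
    induction t using TensorProduct.induction_on with
    | zero => intro s; simp [TensorProduct.tmul_zero]
    | add t₁ t₂ ih₁ ih₂ =>
      intro s
      simp only [TensorProduct.tmul_add, map_add, ih₁ s, ih₂ s]
    | tmul b₂ b₁ =>
      intro s
      simp only [TensorProduct.map_tmul, lmul_apply]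
      induction s using TensorProduct.induction_on with
      | zero => simp [TensorProduct.zero_tmul]
      | add s₁ s₂ ih₁ ih₂ =>
        simp only [TensorProduct.add_tmul, map_add, TensorProduct.tmul_add, ih₁, ih₂]
      | tmul a₂ a₁ =>
        simp only [TensorProduct.tensorTensorTensorComm_tmul, TensorProduct.map_tmul,
          lmul_apply, cop_mul]
        rw [sainv_antimul BA SA SAinv hpA hinv₁ hinv₂ a₂ b₂]
        simp only [hA.mul_assoc]
  exact key ((BA.cop).comul b) ((BA.cop).comul a)

end MainIdentities

section Injectivity

variable {k : Type} [Field k]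

lemma pairing_inj1 {Y Z : Type} [AddCommGroup Y] [Module k Y] [AddCommGroup Z] [Module k Z]
    (q : Y →ₗ[k] Z →ₗ[k] k) (hq : ∀ z, (∀ y, q y z = 0) → z = 0)
    {z z' : Z} (h : ∀ y, q y z = q y z') : z = z' := by
  have := hq (z - z') (fun y => by simp [h y])
  exact sub_eq_zero.mp this

lemma pairing_inj2 {Y Z : Type} [AddCommGroup Y] [Module k Y] [AddCommGroup Z] [Module k Z]
    (q : Y →ₗ[k] Z →ₗ[k] k) (hq : ∀ z, (∀ y, q y z = 0) → z = 0)
    {t t' : Z ⊗[k] Z}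
    (h : ∀ y₁ y₂ : Y, (LinearMap.mul' k k) ((TensorProduct.map (q y₁) (q y₂)) t)
      = (LinearMap.mul' k k) ((TensorProduct.map (q y₁) (q y₂)) t')) : t = t' := by
  suffices hz : ∀ s : Z ⊗[k] Z,
      (∀ y₁ y₂ : Y, (LinearMap.mul' k k) ((TensorProduct.map (q y₁) (q y₂)) s) = 0) → s = 0 by
    have hd := hz (t - t') (fun y₁ y₂ => by simp only [map_sub, h y₁ y₂, sub_self])
    exact sub_eq_zero.mp hd
  intro s hs
  classical
  set L : Z ⊗[k] Z →ₗ[k] Y →ₗ[k] Z := TensorProduct.lift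
    (LinearMap.mk₂ k (fun z₁ z₂ => (q.flip z₁).smulRight z₂)
      (fun z₁ z₁' z₂ => by ext y; simp [add_smul, smul_add, smul_smul, mul_comm])
      (fun c z₁ z₂ => by ext y; simp [add_smul, smul_add, smul_smul, mul_comm])
      (fun z₁ z₂ z₂' => by ext y; simp [add_smul, smul_add, smul_smul, mul_comm])
      (fun c z₁ z₂ => by ext y; simp [add_smul, smul_add, smul_smul, mul_comm])) with hLdef
  have hL0 : ∀ y, L s y = 0 := by
    intro y; apply hq; intro y₂
    have e : ∀ s : Z ⊗[k] Z, q y₂ (L s y)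
        = (LinearMap.mul' k k) ((TensorProduct.map (q y) (q y₂)) s) := by
      intro s
      induction s using TensorProduct.induction_on with
      | zero => simp
      | add a b iha ihb => simp only [map_add, LinearMap.add_apply, iha, ihb]
      | tmul z₁ z₂ =>
        simp [hLdef, smul_eq_mul, mul_comm]
    rw [e, hs y y₂]
  let b := Module.Basis.ofVectorSpace k Z
  obtain ⟨cc, hcc⟩ := TensorProduct.eq_repr_basis_right (𝒞 := b) (x := s)
  have hc0 : ∀ i, cc i = 0 := by
    intro i
    apply hq; intro y
    have hsum : (cc.sum fun i m => q y m • b i) = 0 := by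
      have h1 : L s y = cc.sum fun i m => q y m • b i := by
        rw [← hcc, map_finsuppSum]
        rw [LinearMap.finsupp_sum_apply]
        apply Finsupp.sum_congr
        intro j _
        simp [hLdef]
      rw [← h1]; exact hL0 y
    have hli := b.linearIndependent
    rw [linearIndependent_iff] at hli
    have hmr : Finsupp.linearCombination k (⇑b) (cc.mapRange (fun m => q y m) (map_zero _)) = 0 := by
      rw [Finsupp.linearCombination_apply, Finsupp.sum_mapRange_index (by simp)]
      exact hsum
    have := hli _ hmr
    have := DFunLike.congr_fun this i
    simpa using this
  have hcz : cc = 0 := Finsupp.ext hc0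
  rw [← hcc, hcz, Finsupp.sum_zero_index]

end Injectivity

section Bridges

set_option synthInstance.maxHeartbeats 400000

variable {k : Type} [Field k] {X A : Type}
  [AddCommGroup X] [Module k X] [AddCommGroup A] [Module k A]
variable (BX : BialgData k X) (BA : BialgData k A)
  (SX : X →ₗ[k] X) (SA SAinv : A →ₗ[k] A) (p : X →ₗ[k] A →ₗ[k] k)

/-- double pairing `X⊗X → (A⊗A)*`. -/
noncomputable def pp2 : X ⊗[k] X →ₗ[k] Module.Dual k (A ⊗[k] A) :=
  (TensorProduct.dualDistrib k A A) ∘ₗ (TensorProduct.map p p)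

/-- double pairing `A⊗A → (X⊗X)*` (skew). -/
noncomputable def qq2 : A ⊗[k] A →ₗ[k] Module.Dual k (X ⊗[k] X) :=
  (TensorProduct.dualDistrib k X X) ∘ₗ (TensorProduct.map p.flip p.flip) ∘ₗ
    (TensorProduct.comm k A A).toLinearMap

@[simp] lemma pp2_apply (y z : X) (α β : A) :
    pp2 p (y ⊗ₜ z) (α ⊗ₜ β) = p y α * p z β := by
  simp [pp2, TensorProduct.dualDistrib_apply]

@[simp] lemma qq2_apply (α β : A) (y z : X) :
    qq2 p (α ⊗ₜ β) (y ⊗ₜ z) = p y β * p z α := by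
  simp [qq2, TensorProduct.dualDistrib_apply, mul_comm]

/-- `⟨xy, a⟩ = Σ ⟨x,a'⟩⟨y,a''⟩`, tensor form. -/
lemma pml' (hp : IsWeakHopfSkewPair BX BA SX SAinv p) (t : X ⊗[k] X) (a : A) :
    p (BX.mul t) a = pp2 p t (BA.comul a) := by
  induction t using TensorProduct.induction_on with
  | zero => simp
  | add s₁ s₂ ih₁ ih₂ => simp only [map_add, LinearMap.add_apply, ih₁, ih₂]
  | tmul y z =>
    rw [hp.pair_mul_left y z a]
    have e : ∀ w : A ⊗[k] A,
        (TensorProduct.lid k k) ((TensorProduct.map (p y) (p z)) w)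
          = pp2 p (y ⊗ₜ z) w := by
      intro w
      induction w using TensorProduct.induction_on with
      | zero => simp
      | add w₁ w₂ ih₁ ih₂ => simp only [map_add, LinearMap.add_apply, ih₁, ih₂]
      | tmul α β => simp [TensorProduct.lid_tmul, smul_eq_mul]
    exact e (BA.comul a)

/-- `⟨x, ab⟩ = Σ ⟨x'',a⟩⟨x',b⟩`, tensor form. -/
lemma pmr' (hp : IsWeakHopfSkewPair BX BA SX SAinv p) (s : A ⊗[k] A) (x : X) :
    p x (BA.mul s) = qq2 p s (BX.comul x) := by
  induction s using TensorProduct.induction_on with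
  | zero => simp
  | add s₁ s₂ ih₁ ih₂ => simp only [map_add, LinearMap.add_apply, ih₁, ih₂]
  | tmul α β =>
    rw [hp.pair_mul_right x α β]
    have e : ∀ w : X ⊗[k] X,
        (TensorProduct.lid k k) ((TensorProduct.map (p.flip β) (p.flip α)) w)
          = qq2 p (α ⊗ₜ β) w := by
      intro w
      induction w using TensorProduct.induction_on with
      | zero => simp
      | add w₁ w₂ ih₁ ih₂ => simp only [map_add, LinearMap.add_apply, ih₁, ih₂]
      | tmul y z => simp [TensorProduct.lid_tmul, smul_eq_mul]
    exact e (BX.comul x)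

/-- evaluation of a scalar-weighted tensor. -/
lemma eval_lid_map {M N : Type} [AddCommGroup M] [Module k M] [AddCommGroup N] [Module k N]
    (f : M →ₗ[k] k) (g : N →ₗ[k] k) (t : M ⊗[k] N) :
    g ((TensorProduct.lid k N) ((TensorProduct.map f LinearMap.id) t))
      = (LinearMap.mul' k k) ((TensorProduct.map f g) t) := by
  induction t using TensorProduct.induction_on with
  | zero => simp
  | add t₁ t₂ ih₁ ih₂ => simp only [map_add, ih₁, ih₂]
  | tmul m n => simp [TensorProduct.lid_tmul, smul_eq_mul]

/-- explicit form of `ract` on a pure tensor. -/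
lemma ract_tmul (a : A) (x : X) :
    ract BA SAinv p (a ⊗ₜ x)
      = (TensorProduct.lid k A)
          ((TensorProduct.map ((p x) ∘ₗ BA.mul ∘ₗ (TensorProduct.map SAinv LinearMap.id))
            LinearMap.id)
          ((BialgData.rot3 k A A A) (BialgData.comul2 BA a))) := by
  have key : ∀ t : (A ⊗[k] A) ⊗[k] A,
      (TensorProduct.lid k A) ((TensorProduct.map (contractLeft k X) LinearMap.id)
        ((BialgData.swap23 k (Module.Dual k X) A X)
          (((TensorProduct.map (p.flip ∘ₗ BA.mul ∘ₗ TensorProduct.map SAinv LinearMap.id)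
              LinearMap.id) t) ⊗ₜ x)))
      = (TensorProduct.lid k A)
          ((TensorProduct.map ((p x) ∘ₗ BA.mul ∘ₗ (TensorProduct.map SAinv LinearMap.id))
            LinearMap.id) t) := by
    intro t
    induction t using TensorProduct.induction_on with
    | zero =>
      rw [map_zero, TensorProduct.zero_tmul]
      simp
    | add t₁ t₂ ih₁ ih₂ =>
      simp only [map_add, TensorProduct.add_tmul, ih₁, ih₂]
    | tmul m γ =>
      simp [BialgData.swap23, TensorProduct.assoc_tmul, TensorProduct.assoc_symm_tmul,
        TensorProduct.comm_tmul, TensorProduct.lid_tmul]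
  exact key ((BialgData.rot3 k A A A) (BialgData.comul2 BA a))

/-- explicit form of `lact` on a pure tensor. -/
lemma lact_tmul (a : A) (x : X) :
    lact BX SX p (a ⊗ₜ x)
      = (TensorProduct.lid k X)
          ((TensorProduct.map ((p.flip a) ∘ₗ BX.mul ∘ₗ (TensorProduct.map LinearMap.id SX))
            LinearMap.id)
          ((BialgData.swap23 k X X X) (BialgData.comul2 BX x))) := by
  have key : ∀ t : (X ⊗[k] X) ⊗[k] X,
      (TensorProduct.lid k X) ((TensorProduct.map (contractLeft k A) LinearMap.id)
        ((TensorProduct.map ((TensorProduct.comm k A (Module.Dual k A)) :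
            A ⊗[k] Module.Dual k A →ₗ[k] Module.Dual k A ⊗[k] A) LinearMap.id)
          ((TensorProduct.assoc k A (Module.Dual k A) X).symm
            (a ⊗ₜ ((TensorProduct.map (p ∘ₗ BX.mul ∘ₗ TensorProduct.map LinearMap.id SX)
              LinearMap.id) t)))))
      = (TensorProduct.lid k X)
          ((TensorProduct.map ((p.flip a) ∘ₗ BX.mul ∘ₗ (TensorProduct.map LinearMap.id SX))
            LinearMap.id) t) := by
    intro t
    induction t using TensorProduct.induction_on with
    | zero => simp
    | add t₁ t₂ ih₁ ih₂ =>
      simp only [map_add, TensorProduct.tmul_add, ih₁, ih₂]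
    | tmul m γ =>
      simp [TensorProduct.assoc_symm_tmul, TensorProduct.comm_tmul, TensorProduct.lid_tmul]
  exact key ((BialgData.swap23 k X X X) (BialgData.comul2 BX x))

end Bridges

section BridgeMain

variable {k : Type} [Field k] {X A : Type}
  [AddCommGroup X] [Module k X] [AddCommGroup A] [Module k A]
variable (BX : BialgData k X) (BA : BialgData k A)
  (SX : X →ₗ[k] X) (SA SAinv : A →ₗ[k] A) (p : X →ₗ[k] A →ₗ[k] k)

/-- Bridge for the right action: `⟨u, a ◁ x⟩ = ⟨adX1 u x, a⟩`. -/
lemma bridge_R1 (hA : BA.IsBialgebra) (hp : IsWeakHopfSkewPair BX BA SX SAinv p)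
    (u : X) (a : A) (x : X) :
    p u (ract BA SAinv p (a ⊗ₜ x)) = p (adX1 BX SX u x) a := by
  have G : X →ₗ[k] Module.Dual k (A ⊗[k] A) :=
    pp2 p ∘ₗ (TensorProduct.mk k X X u) ∘ₗ SX
  set G : X →ₗ[k] Module.Dual k (A ⊗[k] A) :=
    pp2 p ∘ₗ (TensorProduct.mk k X X u) ∘ₗ SX with hG
  -- left side
  have hL : p u (ract BA SAinv p (a ⊗ₜ x))
      = ((LinearMap.mul' k k) ∘ₗ
          (TensorProduct.map ((p x) ∘ₗ BA.mul ∘ₗ (TensorProduct.map SAinv LinearMap.id)) (p u))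
            ∘ₗ (BialgData.rot3 k A A A))
          ((TensorProduct.map BA.comul LinearMap.id) (BA.comul a)) := by
    rw [ract_tmul BA SAinv p a x]
    exact eval_lid_map _ (p u) _
  -- right side
  have hR : p (adX1 BX SX u x) a
      = ((LinearMap.applyₗ (BX.comul x)) ∘ₗ (TensorProduct.dualDistrib k X X) ∘ₗ
          (TensorProduct.map p.flip G.flip))
          ((TensorProduct.map LinearMap.id BA.comul) (BA.comul a)) := by
    have h0 : p (adX1 BX SX u x) a
        = pp2 p ((TensorProduct.map LinearMap.id (lmul BX u ∘ₗ SX)) (BX.comul x))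
            (BA.comul a) :=
      pml' BX BA SX SAinv p hp _ a
    rw [h0]
    have e2 : ∀ (r : X ⊗[k] X) (w : A ⊗[k] A),
        pp2 p ((TensorProduct.map LinearMap.id (lmul BX u ∘ₗ SX)) r) w
          = ((LinearMap.applyₗ r) ∘ₗ (TensorProduct.dualDistrib k X X) ∘ₗ
              (TensorProduct.map p.flip G.flip))
              ((TensorProduct.map LinearMap.id BA.comul) w) := by
      intro r
      induction r using TensorProduct.induction_on with
      | zero => intro w; simp
      | add r₁ r₂ ih₁ ih₂ =>
        intro w
        simp only [map_add, LinearMap.add_apply, LinearMap.comp_apply] at ih₁ ih₂ ⊢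
        rw [ih₁ w, ih₂ w]
      | tmul y z =>
        intro w
        induction w using TensorProduct.induction_on with
        | zero => simp
        | add w₁ w₂ ih₁ ih₂ =>
          simp only [map_add, LinearMap.add_apply, LinearMap.comp_apply] at ih₁ ih₂ ⊢
          rw [ih₁, ih₂]
        | tmul α β =>
          simp only [TensorProduct.map_tmul, LinearMap.comp_apply, LinearMap.id_apply,
            lmul_apply, pp2_apply]
          rw [pml' BX BA SX SAinv p hp (u ⊗ₜ SX z) β]
          simp [hG, TensorProduct.dualDistrib_apply]
    exact e2 (BX.comul x) (BA.comul a)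
  rw [hL, hR]
  refine coassoc_apply BA hA _ _ (fun α β γ => ?_) a
  -- pure agreement
  simp only [LinearMap.comp_apply, BialgData.rot3, LinearEquiv.coe_coe,
    TensorProduct.comm_tmul, TensorProduct.assoc_symm_tmul, TensorProduct.map_tmul,
    LinearMap.id_apply, LinearMap.mul'_apply]
  rw [pmr' BX BA SX SAinv p hp (SAinv γ ⊗ₜ α) x]
  have key : ∀ r : X ⊗[k] X,
      qq2 p (SAinv γ ⊗ₜ α) r * p u β
        = (TensorProduct.dualDistrib k X X) ((p.flip α) ⊗ₜ (G.flip (β ⊗ₜ γ))) r := by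
    intro r
    induction r using TensorProduct.induction_on with
    | zero => simp
    | add r₁ r₂ ih₁ ih₂ => simp only [map_add, LinearMap.add_apply, add_mul, ih₁, ih₂]
    | tmul y z =>
      simp only [qq2_apply, TensorProduct.dualDistrib_apply, LinearMap.flip_apply, hG,
        LinearMap.comp_apply, TensorProduct.mk_apply, pp2_apply]
      rw [hp.pair_antipode z γ]
      ring
  exact key (BX.comul x)

/-- Bridge for the left action: `⟨a ▷ x, c⟩ = ⟨x, Ua c a⟩`. -/
lemma bridge_R2 (hX : BX.IsBialgebra) (hp : IsWeakHopfSkewPair BX BA SX SAinv p)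
    (c : A) (a : A) (x : X) :
    p (lact BX SX p (a ⊗ₜ x)) c = p x (Ua BA SAinv c a) := by
  set G₁ : X ⊗[k] X →ₗ[k] A →ₗ[k] k := (qq2 p ∘ₗ (TensorProduct.mk k A A c)).flip with hG₁
  set G₂ : X →ₗ[k] A →ₗ[k] k := (LinearMap.lcomp k k SAinv) ∘ₗ p with hG₂
  have hL : p (lact BX SX p (a ⊗ₜ x)) c
      = ((LinearMap.mul' k k) ∘ₗ
          (TensorProduct.map ((p.flip a) ∘ₗ BX.mul ∘ₗ (TensorProduct.map LinearMap.id SX))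
            (p.flip c)) ∘ₗ (BialgData.swap23 k X X X))
          ((TensorProduct.map BX.comul LinearMap.id) (BX.comul x)) := by
    rw [lact_tmul BX SX p a x]
    exact eval_lid_map _ (p.flip c) _
  have hR : p x (Ua BA SAinv c a)
      = ((LinearMap.applyₗ ((TensorProduct.comm k A A) (BA.comul a))) ∘ₗ
          (TensorProduct.dualDistrib k A A) ∘ₗ
          (TensorProduct.comm k (Module.Dual k A) (Module.Dual k A)).toLinearMap ∘ₗ
          (TensorProduct.map G₁ G₂))
          ((TensorProduct.map BX.comul LinearMap.id) (BX.comul x)) := by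
    have h0 : p x (Ua BA SAinv c a)
        = qq2 p ((TensorProduct.map SAinv (lmul (BA.cop) c))
            ((TensorProduct.comm k A A) (BA.comul a))) (BX.comul x) :=
      pmr' BX BA SX SAinv p hp _ x
    rw [h0]
    have e2 : ∀ (r : A ⊗[k] A) (t : X ⊗[k] X),
        qq2 p ((TensorProduct.map SAinv (lmul (BA.cop) c)) r) t
          = ((LinearMap.applyₗ r) ∘ₗ (TensorProduct.dualDistrib k A A) ∘ₗ
              (TensorProduct.comm k (Module.Dual k A) (Module.Dual k A)).toLinearMap ∘ₗ
              (TensorProduct.map G₁ G₂))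
              ((TensorProduct.map BX.comul LinearMap.id) t) := by
      intro r
      induction r using TensorProduct.induction_on with
      | zero => intro t; simp
      | add r₁ r₂ ih₁ ih₂ =>
        intro t
        simp only [map_add, LinearMap.add_apply, LinearMap.comp_apply] at ih₁ ih₂ ⊢
        rw [ih₁ t, ih₂ t]
      | tmul α β =>
        intro t
        induction t using TensorProduct.induction_on with
        | zero => simp
        | add t₁ t₂ ih₁ ih₂ =>
          simp only [map_add, LinearMap.add_apply, LinearMap.comp_apply] at ih₁ ih₂ ⊢
          rw [ih₁, ih₂]
        | tmul w γ =>
          simp only [TensorProduct.map_tmul, LinearMap.comp_apply, LinearMap.id_apply,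
            lmul_apply, qq2_apply, cop_mul]
          rw [pmr' BX BA SX SAinv p hp (c ⊗ₜ β) w]
          simp only [LinearEquiv.coe_coe, TensorProduct.comm_tmul,
            TensorProduct.dualDistrib_apply, hG₁, hG₂, LinearMap.flip_apply,
            LinearMap.comp_apply, TensorProduct.mk_apply, LinearMap.applyₗ_apply_apply,
            LinearMap.lcomp_apply]
          ring
    exact e2 ((TensorProduct.comm k A A) (BA.comul a)) (BX.comul x)
  rw [hL, hR]
  congr 1
  apply TensorProduct.ext_threefold
  intro y v w
  simp only [LinearMap.comp_apply, BialgData.swap23, LinearEquiv.coe_coe,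
    TensorProduct.assoc_tmul, TensorProduct.map_tmul, LinearMap.id_apply,
    TensorProduct.comm_tmul, TensorProduct.assoc_symm_tmul, LinearMap.mul'_apply,
    LinearMap.flip_apply]
  rw [pml' BX BA SX SAinv p hp (y ⊗ₜ SX w) a]
  have key : ∀ r : A ⊗[k] A,
      pp2 p (y ⊗ₜ SX w) r * p v c
        = (TensorProduct.dualDistrib k A A) ((G₂ w) ⊗ₜ (G₁ (y ⊗ₜ v)))
            ((TensorProduct.comm k A A) r) := by
    intro r
    induction r using TensorProduct.induction_on with
    | zero => simp
    | add r₁ r₂ ih₁ ih₂ =>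
      simp only [map_add, LinearMap.add_apply, add_mul, ih₁, ih₂]
    | tmul α β =>
      simp only [pp2_apply, LinearEquiv.coe_coe, TensorProduct.comm_tmul,
        TensorProduct.dualDistrib_apply, hG₁, hG₂, LinearMap.flip_apply,
        LinearMap.comp_apply, TensorProduct.mk_apply, LinearMap.lcomp_apply, qq2_apply]
      rw [hp.pair_antipode w β]
      ring
  exact key (BA.comul a)

end BridgeMain

section Coassoc4

variable {k : Type} [Field k] {H : Type} [AddCommGroup H] [Module k H]
variable (B : BialgData k H)

/-- map-level coassociativity -/
lemma comul_comul (hB : B.IsBialgebra) :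
    (TensorProduct.map LinearMap.id B.comul) ∘ₗ B.comul
      = (TensorProduct.assoc k H H H).toLinearMap ∘ₗ
          (TensorProduct.map B.comul LinearMap.id) ∘ₗ B.comul :=
  LinearMap.ext fun a => (hB.coassoc a).symm

/-- 4-fold regrouping: from `((1(23))4)` to `(1(2(34)))`. -/
lemma coassoc4_apply (hB : B.IsBialgebra) {M : Type} [AddCommGroup M] [Module k M]
    (Φ : (H ⊗[k] (H ⊗[k] H)) ⊗[k] H →ₗ[k] M) (Ψ : H ⊗[k] (H ⊗[k] (H ⊗[k] H)) →ₗ[k] M)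
    (hpure : ∀ α β γ δ : H, Φ ((α ⊗ₜ (β ⊗ₜ γ)) ⊗ₜ δ) = Ψ (α ⊗ₜ (β ⊗ₜ (γ ⊗ₜ δ))))
    (a : H) :
    Φ ((TensorProduct.map (TensorProduct.map LinearMap.id B.comul) LinearMap.id)
        ((TensorProduct.map B.comul LinearMap.id) (B.comul a)))
      = Ψ ((TensorProduct.map LinearMap.id (TensorProduct.map LinearMap.id B.comul))
          ((TensorProduct.map LinearMap.id B.comul) (B.comul a))) := by
  set t3L := (TensorProduct.map B.comul LinearMap.id) (B.comul a) with ht3L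
  set t4LM := (TensorProduct.map (TensorProduct.map LinearMap.id B.comul) LinearMap.id) t3L
    with ht4LM
  have e1 : (TensorProduct.map LinearMap.id (TensorProduct.map LinearMap.id B.comul))
        ((TensorProduct.map LinearMap.id B.comul) (B.comul a))
      = (TensorProduct.map LinearMap.id (TensorProduct.assoc k H H H).toLinearMap)
          ((TensorProduct.assoc k H (H ⊗[k] H) H) t4LM) := by
    have s1 : (TensorProduct.map LinearMap.id (TensorProduct.map LinearMap.id B.comul))
          ((TensorProduct.map LinearMap.id B.comul) (B.comul a))
        = (TensorProduct.map LinearMap.id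
            ((TensorProduct.map LinearMap.id B.comul) ∘ₗ B.comul)) (B.comul a) := by
      have h : (TensorProduct.map (LinearMap.id : H →ₗ[k] H)
            ((TensorProduct.map LinearMap.id B.comul) ∘ₗ B.comul))
          = (TensorProduct.map LinearMap.id (TensorProduct.map LinearMap.id B.comul)) ∘ₗ
              (TensorProduct.map LinearMap.id B.comul) :=
        TensorProduct.ext' fun u v => by simp
      rw [h]; rfl
    rw [s1, comul_comul B hB]
    have s2 : (TensorProduct.map (LinearMap.id : H →ₗ[k] H)
          ((TensorProduct.assoc k H H H).toLinearMap ∘ₗ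
            (TensorProduct.map B.comul LinearMap.id) ∘ₗ B.comul))
        = (TensorProduct.map LinearMap.id (TensorProduct.assoc k H H H).toLinearMap) ∘ₗ
            (TensorProduct.map LinearMap.id (TensorProduct.map B.comul LinearMap.id)) ∘ₗ
            (TensorProduct.map LinearMap.id B.comul) :=
      TensorProduct.ext' fun u v => by simp
    rw [s2]
    simp only [LinearMap.comp_apply]
    congr 1
    have s3 : (TensorProduct.map LinearMap.id B.comul) (B.comul a)
        = (TensorProduct.assoc k H H H) t3L := hB.coassoc a ▸ rfl
    rw [show (TensorProduct.map LinearMap.id B.comul) (B.comul a)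
        = (TensorProduct.assoc k H H H) t3L from (hB.coassoc a).symm ▸ rfl]
    exact map_assoc_nat LinearMap.id B.comul LinearMap.id t3L
  rw [e1]
  have key : Ψ ∘ₗ (TensorProduct.map LinearMap.id (TensorProduct.assoc k H H H).toLinearMap)
        ∘ₗ (TensorProduct.assoc k H (H ⊗[k] H) H).toLinearMap = Φ := by
    apply TensorProduct.ext_threefold
    intro α m δ
    simp only [LinearMap.comp_apply, LinearEquiv.coe_coe, TensorProduct.assoc_tmul,
      TensorProduct.map_tmul, LinearMap.id_apply]
    induction m using TensorProduct.induction_on with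
    | zero => simp [TensorProduct.zero_tmul, TensorProduct.tmul_zero]
    | add m₁ m₂ ih₁ ih₂ =>
      simp only [TensorProduct.add_tmul, TensorProduct.tmul_add, map_add, ih₁, ih₂]
    | tmul β γ =>
      simp only [TensorProduct.assoc_tmul, TensorProduct.map_tmul, LinearMap.id_apply]
      exact (hpure α β γ δ).symm
  exact (LinearMap.congr_fun key t4LM).symm

/-- 4-fold regrouping: `((1(23))4)` equals `assoc`-image of `(((12)3)4)`. -/
lemma tree4_LM_eq_LL (hB : B.IsBialgebra) (x : H) :
    (TensorProduct.map (TensorProduct.map LinearMap.id B.comul) LinearMap.id)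
        ((TensorProduct.map B.comul LinearMap.id) (B.comul x))
      = (TensorProduct.map (TensorProduct.assoc k H H H).toLinearMap LinearMap.id)
          ((TensorProduct.map (TensorProduct.map B.comul LinearMap.id) LinearMap.id)
            ((TensorProduct.map B.comul LinearMap.id) (B.comul x))) := by
  have h1 : TensorProduct.map ((TensorProduct.map (LinearMap.id : H →ₗ[k] H) B.comul) ∘ₗ B.comul) (LinearMap.id : H →ₗ[k] H)
      = (TensorProduct.map (TensorProduct.map LinearMap.id B.comul) LinearMap.id) ∘ₗ
        (TensorProduct.map B.comul LinearMap.id) :=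
    TensorProduct.ext' fun u v => by simp
  have h2 : (TensorProduct.map ((TensorProduct.assoc k H H H).toLinearMap ∘ₗ
        (TensorProduct.map B.comul LinearMap.id) ∘ₗ B.comul) (LinearMap.id : H →ₗ[k] H))
      = (TensorProduct.map (TensorProduct.assoc k H H H).toLinearMap LinearMap.id) ∘ₗ
          (TensorProduct.map (TensorProduct.map B.comul LinearMap.id) LinearMap.id) ∘ₗ
          (TensorProduct.map B.comul LinearMap.id) :=
    TensorProduct.ext' fun u v => by simp
  calc (TensorProduct.map (TensorProduct.map LinearMap.id B.comul) LinearMap.id)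
        ((TensorProduct.map B.comul LinearMap.id) (B.comul x))
      = (TensorProduct.map ((TensorProduct.map LinearMap.id B.comul) ∘ₗ B.comul) LinearMap.id)
          (B.comul x) := (LinearMap.congr_fun h1 (B.comul x)).symm
    _ = (TensorProduct.map ((TensorProduct.assoc k H H H).toLinearMap ∘ₗ
          (TensorProduct.map B.comul LinearMap.id) ∘ₗ B.comul) LinearMap.id) (B.comul x) := by
          rw [comul_comul B hB]
    _ = _ := LinearMap.congr_fun h2 (B.comul x)

end Coassoc4

section DeepBridges

variable {k : Type} [Field k] {X A : Type}
  [AddCommGroup X] [Module k X] [AddCommGroup A] [Module k A]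
variable (BX : BialgData k X) (BA : BialgData k A)
  (SX : X →ₗ[k] X) (SA SAinv : A →ₗ[k] A) (p : X →ₗ[k] A →ₗ[k] k)

/-- right-hand side of goal 3, paired. -/
lemma bridge_R3R (hA : BA.IsBialgebra) (hp : IsWeakHopfSkewPair BX BA SX SAinv p)
    (u v : X) (a : A) (x : X) :
    (LinearMap.mul' k k) ((TensorProduct.map (p u) (p v))
      ((TensorProduct.map (ract BA SAinv p) (ract BA SAinv p))
        ((TensorProduct.tensorTensorTensorComm k A A X X) (BA.comul a ⊗ₜ BX.comul x))))
      = p (BX.conv (adX1 BX SX u) (adX1 BX SX v) x) a := by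
  have key : ∀ (s : A ⊗[k] A) (t : X ⊗[k] X),
      (LinearMap.mul' k k) ((TensorProduct.map (p u) (p v))
        ((TensorProduct.map (ract BA SAinv p) (ract BA SAinv p))
          ((TensorProduct.tensorTensorTensorComm k A A X X) (s ⊗ₜ t))))
      = pp2 p ((TensorProduct.map (adX1 BX SX u) (adX1 BX SX v)) t) s := by
    intro s
    induction s using TensorProduct.induction_on with
    | zero => intro t; simp [TensorProduct.zero_tmul]
    | add s₁ s₂ ih₁ ih₂ =>
      intro t
      simp only [TensorProduct.add_tmul, map_add, LinearMap.add_apply, ih₁ t, ih₂ t]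
    | tmul a₁ a₂ =>
      intro t
      induction t using TensorProduct.induction_on with
      | zero => simp [TensorProduct.tmul_zero]
      | add t₁ t₂ ih₁ ih₂ =>
        simp only [TensorProduct.tmul_add, map_add, LinearMap.add_apply, ih₁, ih₂]
      | tmul x₁ x₂ =>
        simp only [TensorProduct.tensorTensorTensorComm_tmul, TensorProduct.map_tmul,
          LinearMap.mul'_apply, pp2_apply]
        rw [bridge_R1 BX BA SX SAinv p hA hp u a₁ x₁,
          bridge_R1 BX BA SX SAinv p hA hp v a₂ x₂]
  rw [key (BA.comul a) (BX.comul x)]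
  exact (pml' BX BA SX SAinv p hp _ a).symm

/-- right-hand side of goal 6, paired. -/
lemma bridge_R6R (hX : BX.IsBialgebra) (hp : IsWeakHopfSkewPair BX BA SX SAinv p)
    (b c : A) (a : A) (x : X) :
    (LinearMap.mul' k k) ((TensorProduct.map (p.flip b) (p.flip c))
      ((TensorProduct.map (lact BX SX p) (lact BX SX p))
        ((TensorProduct.tensorTensorTensorComm k A A X X) (BA.comul a ⊗ₜ BX.comul x))))
      = p x ((BA.cop).conv (Ua BA SAinv c) (Ua BA SAinv b) a) := by
  have key : ∀ (s : A ⊗[k] A) (t : X ⊗[k] X),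
      (LinearMap.mul' k k) ((TensorProduct.map (p.flip b) (p.flip c))
        ((TensorProduct.map (lact BX SX p) (lact BX SX p))
          ((TensorProduct.tensorTensorTensorComm k A A X X) (s ⊗ₜ t))))
      = qq2 p ((TensorProduct.map (Ua BA SAinv c) (Ua BA SAinv b))
          ((TensorProduct.comm k A A) s)) t := by
    intro s
    induction s using TensorProduct.induction_on with
    | zero => intro t; simp [TensorProduct.zero_tmul]
    | add s₁ s₂ ih₁ ih₂ =>
      intro t
      simp only [TensorProduct.add_tmul, map_add, LinearMap.add_apply, ih₁ t, ih₂ t]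
    | tmul a₁ a₂ =>
      intro t
      induction t using TensorProduct.induction_on with
      | zero => simp [TensorProduct.tmul_zero]
      | add t₁ t₂ ih₁ ih₂ =>
        simp only [TensorProduct.tmul_add, map_add, LinearMap.add_apply, ih₁, ih₂]
      | tmul x₁ x₂ =>
        simp only [TensorProduct.tensorTensorTensorComm_tmul, TensorProduct.map_tmul,
          LinearMap.mul'_apply, qq2_apply, LinearEquiv.coe_coe, TensorProduct.comm_tmul,
          LinearMap.flip_apply]
        rw [bridge_R2 BX BA SX SAinv p hX hp b a₁ x₁,
          bridge_R2 BX BA SX SAinv p hX hp c a₂ x₂]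
  rw [key (BA.comul a) (BX.comul x)]
  exact (pmr' BX BA SX SAinv p hp _ x).symm

/-- left-hand side of goal 3, paired. -/
lemma bridge_R3L (hA : BA.IsBialgebra) (hp : IsWeakHopfSkewPair BX BA SX SAinv p)
    (u v : X) (a : A) (x : X) :
    (LinearMap.mul' k k) ((TensorProduct.map (p u) (p v))
      (BA.comul (ract BA SAinv p (a ⊗ₜ x))))
      = p (adX2 BX SX u v x) a := by
  set quv : A →ₗ[k] k :=
    (LinearMap.mul' k k) ∘ₗ (TensorProduct.map (p u) (p v)) ∘ₗ BA.comul with hquv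
  set fx : A ⊗[k] A →ₗ[k] k :=
    (p x) ∘ₗ BA.mul ∘ₗ (TensorProduct.map SAinv LinearMap.id) with hfx
  set Φ₄ : (A ⊗[k] (A ⊗[k] A)) ⊗[k] A →ₗ[k] k :=
    (LinearMap.mul' k k) ∘ₗ
      (TensorProduct.map fx ((LinearMap.mul' k k) ∘ₗ (TensorProduct.map (p u) (p v))))
      ∘ₗ (BialgData.rot3 k A (A ⊗[k] A) A) with hΦ₄
  set Gv : X →ₗ[k] Module.Dual k (A ⊗[k] A) :=
    pp2 p ∘ₗ (TensorProduct.mk k X X v) ∘ₗ SX with hGv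
  set H₂ : A ⊗[k] (A ⊗[k] A) →ₗ[k] Module.Dual k X := TensorProduct.lift
    (LinearMap.mk₂ k (fun β m' => p u β • Gv.flip m')
      (fun β₁ β₂ m' => by simp [map_add, add_smul])
      (fun r β m' => by simp [map_smul, mul_smul])
      (fun β m₁ m₂ => by simp [map_add, smul_add])
      (fun r β m' => by simp [map_smul, smul_smul, mul_comm])) with hH₂
  set Ψ₄ : A ⊗[k] (A ⊗[k] (A ⊗[k] A)) →ₗ[k] k :=
    (LinearMap.applyₗ (BX.comul x)) ∘ₗ (TensorProduct.dualDistrib k X X) ∘ₗ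
      (TensorProduct.map p.flip H₂) with hΨ₄
  -- LHS
  have hL1 : (LinearMap.mul' k k) ((TensorProduct.map (p u) (p v))
        (BA.comul (ract BA SAinv p (a ⊗ₜ x))))
      = (LinearMap.mul' k k) ((TensorProduct.map fx quv)
          ((BialgData.rot3 k A A A)
            ((TensorProduct.map BA.comul LinearMap.id) (BA.comul a)))) := by
    show quv (ract BA SAinv p (a ⊗ₜ x)) = _
    rw [ract_tmul BA SAinv p a x]
    exact eval_lid_map _ quv _
  have hL2 : (LinearMap.mul' k k) ∘ₗ (TensorProduct.map fx quv) ∘ₗ (BialgData.rot3 k A A A)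
      = Φ₄ ∘ₗ (TensorProduct.map (TensorProduct.map LinearMap.id BA.comul) LinearMap.id) :=
    TensorProduct.ext_threefold fun α β γ => by
      simp [hΦ₄, hquv, BialgData.rot3, TensorProduct.assoc_symm_tmul, TensorProduct.comm_tmul]
  -- RHS
  have hR2 : ∀ (r : X ⊗[k] X) (w : A ⊗[k] A),
      pp2 p ((TensorProduct.map LinearMap.id (lmul BX u ∘ₗ lmul BX v ∘ₗ SX)) r) w
        = (TensorProduct.dualDistrib k X X)
            ((TensorProduct.map p.flip H₂)
              ((TensorProduct.map LinearMap.id (TensorProduct.map LinearMap.id BA.comul))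
                ((TensorProduct.map LinearMap.id BA.comul) w))) r := by
    intro r
    induction r using TensorProduct.induction_on with
    | zero => intro w; simp
    | add r₁ r₂ ih₁ ih₂ =>
      intro w
      simp only [map_add, LinearMap.add_apply] at ih₁ ih₂ ⊢
      rw [ih₁ w, ih₂ w]
    | tmul y z =>
      intro w
      induction w using TensorProduct.induction_on with
      | zero => simp
      | add w₁ w₂ ih₁ ih₂ =>
        simp only [map_add, LinearMap.add_apply] at ih₁ ih₂ ⊢
        rw [ih₁, ih₂]
      | tmul α β =>
        simp only [TensorProduct.map_tmul, LinearMap.comp_apply, LinearMap.id_apply,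
          lmul_apply, pp2_apply, TensorProduct.dualDistrib_apply, LinearMap.flip_apply]
        have inner : ∀ m : A ⊗[k] A,
            pp2 p (u ⊗ₜ (BX.mul (v ⊗ₜ SX z))) m
              = H₂ ((TensorProduct.map LinearMap.id BA.comul) m) z := by
          intro m
          induction m using TensorProduct.induction_on with
          | zero => simp
          | add m₁ m₂ ih₁ ih₂ =>
            simp only [map_add, LinearMap.add_apply] at ih₁ ih₂ ⊢
            rw [ih₁, ih₂]
          | tmul β₁ β₂ =>
            simp only [pp2_apply, TensorProduct.map_tmul, LinearMap.id_apply]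
            rw [pml' BX BA SX SAinv p hp (v ⊗ₜ SX z) β₂]
            simp [hH₂, hGv, smul_eq_mul]
        rw [pml' BX BA SX SAinv p hp (u ⊗ₜ (BX.mul (v ⊗ₜ SX z))) β, inner (BA.comul β)]
  have hR : p (adX2 BX SX u v x) a
      = Ψ₄ ((TensorProduct.map LinearMap.id (TensorProduct.map LinearMap.id BA.comul))
          ((TensorProduct.map LinearMap.id BA.comul) (BA.comul a))) := by
    have h0 : p (adX2 BX SX u v x) a
        = pp2 p ((TensorProduct.map LinearMap.id (lmul BX u ∘ₗ lmul BX v ∘ₗ SX)) (BX.comul x))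
            (BA.comul a) := pml' BX BA SX SAinv p hp _ a
    rw [h0, hR2 (BX.comul x) (BA.comul a)]
    rfl
  have hL2' := LinearMap.congr_fun hL2 ((TensorProduct.map BA.comul LinearMap.id) (BA.comul a))
  simp only [LinearMap.comp_apply] at hL2'
  rw [hL1, hL2', hR]
  refine coassoc4_apply BA hA Φ₄ Ψ₄ (fun α β γ δ => ?_) a
  simp only [hΦ₄, hΨ₄, LinearMap.comp_apply, BialgData.rot3, LinearEquiv.coe_coe,
    TensorProduct.comm_tmul, TensorProduct.assoc_symm_tmul, TensorProduct.map_tmul,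
    LinearMap.mul'_apply, hfx, LinearMap.id_apply]
  rw [pmr' BX BA SX SAinv p hp (SAinv δ ⊗ₜ α) x]
  have key : ∀ r : X ⊗[k] X,
      qq2 p (SAinv δ ⊗ₜ α) r * (p u β * p v γ)
        = (TensorProduct.dualDistrib k X X) ((p.flip α) ⊗ₜ (H₂ (β ⊗ₜ (γ ⊗ₜ δ)))) r := by
    intro r
    induction r using TensorProduct.induction_on with
    | zero => simp
    | add r₁ r₂ ih₁ ih₂ => simp only [map_add, LinearMap.add_apply, add_mul, ih₁, ih₂]
    | tmul y z =>
      simp only [qq2_apply, TensorProduct.dualDistrib_apply, hH₂,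
        TensorProduct.lift.tmul, LinearMap.mk₂_apply]
      simp only [LinearMap.smul_apply, LinearMap.flip_apply, hGv, LinearMap.comp_apply,
        TensorProduct.mk_apply, pp2_apply, smul_eq_mul]
      rw [hp.pair_antipode z δ]
      ring
  exact key (BX.comul x)

/-- left-hand side of goal 6, paired. -/
lemma bridge_R6L (hX : BX.IsBialgebra) (hp : IsWeakHopfSkewPair BX BA SX SAinv p)
    (b c : A) (a : A) (x : X) :
    (LinearMap.mul' k k) ((TensorProduct.map (p.flip b) (p.flip c))
      (BX.comul (lact BX SX p (a ⊗ₜ x))))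
      = p x (Ua2 BA SAinv b c a) := by
  set qbc : X →ₗ[k] k :=
    (LinearMap.mul' k k) ∘ₗ (TensorProduct.map (p.flip b) (p.flip c)) ∘ₗ BX.comul with hqbc
  set ga : X ⊗[k] X →ₗ[k] k :=
    (p.flip a) ∘ₗ BX.mul ∘ₗ (TensorProduct.map LinearMap.id SX) with hga
  set Φ₇ : (X ⊗[k] (X ⊗[k] X)) ⊗[k] X →ₗ[k] k :=
    (LinearMap.mul' k k) ∘ₗ
      (TensorProduct.map ga ((LinearMap.mul' k k) ∘ₗ
        (TensorProduct.map (p.flip b) (p.flip c))))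
      ∘ₗ (BialgData.swap23 k X (X ⊗[k] X) X) with hΦ₇
  set G₂ : X →ₗ[k] A →ₗ[k] k := (LinearMap.lcomp k k SAinv) ∘ₗ p with hG₂
  set H₁ : (X ⊗[k] X) ⊗[k] X →ₗ[k] Module.Dual k A := TensorProduct.lift
    (LinearMap.mk₂ k (fun m γ' => (p γ' c) • ((qq2 p ∘ₗ (TensorProduct.mk k A A b)).flip m))
      (fun m₁ m₂ γ' => by simp [map_add, smul_add])
      (fun r m γ' => by simp [map_smul, smul_smul, mul_comm])
      (fun m γ₁ γ₂ => by simp [map_add, add_smul])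
      (fun r m γ' => by simp [map_smul, mul_smul])) with hH₁
  set Ξ : ((X ⊗[k] X) ⊗[k] X) ⊗[k] X →ₗ[k] k :=
    (LinearMap.applyₗ ((TensorProduct.comm k A A) (BA.comul a))) ∘ₗ
      (TensorProduct.dualDistrib k A A) ∘ₗ
      (TensorProduct.comm k (Module.Dual k A) (Module.Dual k A)).toLinearMap ∘ₗ
      (TensorProduct.map H₁ G₂) with hΞ
  -- LHS
  have hL1 : (LinearMap.mul' k k) ((TensorProduct.map (p.flip b) (p.flip c))
        (BX.comul (lact BX SX p (a ⊗ₜ x))))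
      = (LinearMap.mul' k k) ((TensorProduct.map ga qbc)
          ((BialgData.swap23 k X X X)
            ((TensorProduct.map BX.comul LinearMap.id) (BX.comul x)))) := by
    show qbc (lact BX SX p (a ⊗ₜ x)) = _
    rw [lact_tmul BX SX p a x]
    exact eval_lid_map _ qbc _
  have hL2 : (LinearMap.mul' k k) ∘ₗ (TensorProduct.map ga qbc) ∘ₗ (BialgData.swap23 k X X X)
      = Φ₇ ∘ₗ (TensorProduct.map (TensorProduct.map LinearMap.id BX.comul) LinearMap.id) :=
    TensorProduct.ext_threefold fun α β γ => by
      simp [hΦ₇, hqbc, BialgData.swap23, TensorProduct.assoc_tmul,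
        TensorProduct.assoc_symm_tmul, TensorProduct.comm_tmul]
  -- RHS
  have inner : ∀ (β : A) (m : X ⊗[k] X),
      qq2 p (c ⊗ₜ (BA.mul (b ⊗ₜ β))) m
        = H₁ ((TensorProduct.map BX.comul LinearMap.id) m) β := by
    intro β m
    induction m using TensorProduct.induction_on with
    | zero => simp
    | add m₁ m₂ ih₁ ih₂ =>
      simp only [map_add, LinearMap.add_apply] at ih₁ ih₂ ⊢
      rw [ih₁, ih₂]
    | tmul y z' =>
      simp only [qq2_apply, TensorProduct.map_tmul, LinearMap.id_apply]
      rw [pmr' BX BA SX SAinv p hp (b ⊗ₜ β) y]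
      simp [hH₁, smul_eq_mul, mul_comm]
  have hR2 : ∀ (r : A ⊗[k] A) (t : X ⊗[k] X),
      qq2 p ((TensorProduct.map SAinv (lmul (BA.cop) c ∘ₗ lmul (BA.cop) b)) r) t
        = (TensorProduct.dualDistrib k A A)
            ((TensorProduct.comm k (Module.Dual k A) (Module.Dual k A))
              ((TensorProduct.map H₁ G₂)
                ((TensorProduct.map (TensorProduct.map BX.comul LinearMap.id) LinearMap.id)
                  ((TensorProduct.map BX.comul LinearMap.id) t)))) r := by
    intro r
    induction r using TensorProduct.induction_on with
    | zero => intro t; simp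
    | add r₁ r₂ ih₁ ih₂ =>
      intro t
      simp only [map_add, LinearMap.add_apply] at ih₁ ih₂ ⊢
      rw [ih₁ t, ih₂ t]
    | tmul α β =>
      intro t
      induction t using TensorProduct.induction_on with
      | zero => simp
      | add t₁ t₂ ih₁ ih₂ =>
        simp only [map_add, LinearMap.add_apply] at ih₁ ih₂ ⊢
        rw [ih₁, ih₂]
      | tmul w γ =>
        simp only [TensorProduct.map_tmul, LinearMap.comp_apply, LinearMap.id_apply,
          lmul_apply, qq2_apply, cop_mul, LinearEquiv.coe_coe, TensorProduct.comm_tmul,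
          TensorProduct.dualDistrib_apply]
        rw [pmr' BX BA SX SAinv p hp (c ⊗ₜ (BA.mul (b ⊗ₜ β))) w, inner β (BX.comul w)]
        simp only [hG₂, LinearMap.comp_apply, LinearMap.lcomp_apply]
        ring
  have hR : p x (Ua2 BA SAinv b c a)
      = Ξ ((TensorProduct.map (TensorProduct.map BX.comul LinearMap.id) LinearMap.id)
          ((TensorProduct.map BX.comul LinearMap.id) (BX.comul x))) := by
    have h0 : Ua2 BA SAinv b c a
        = BA.mul ((TensorProduct.map SAinv (lmul (BA.cop) c ∘ₗ lmul (BA.cop) b))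
            ((TensorProduct.comm k A A) (BA.comul a))) := rfl
    rw [h0, pmr' BX BA SX SAinv p hp _ x, hR2 ((TensorProduct.comm k A A) (BA.comul a))
      (BX.comul x)]
    rfl
  have hL2' := LinearMap.congr_fun hL2 ((TensorProduct.map BX.comul LinearMap.id) (BX.comul x))
  simp only [LinearMap.comp_apply] at hL2'
  rw [hL1, hL2', tree4_LM_eq_LL BX hX x, hR]
  have keymap : Φ₇ ∘ₗ (TensorProduct.map (TensorProduct.assoc k X X X).toLinearMap LinearMap.id)
      = Ξ := by
    apply TensorProduct.ext_fourfold
    intro x₁ x₂ x₃ x₄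
    simp only [LinearMap.comp_apply, TensorProduct.map_tmul, LinearMap.id_apply,
      LinearEquiv.coe_coe, TensorProduct.assoc_tmul, hΦ₇, hΞ, BialgData.swap23,
      TensorProduct.assoc_symm_tmul, TensorProduct.comm_tmul, LinearMap.mul'_apply, hga,
      LinearMap.flip_apply]
    rw [pml' BX BA SX SAinv p hp (x₁ ⊗ₜ SX x₄) a]
    have key2 : ∀ r : A ⊗[k] A,
        pp2 p (x₁ ⊗ₜ SX x₄) r * (p x₂ b * p x₃ c)
          = (TensorProduct.dualDistrib k A A) ((G₂ x₄) ⊗ₜ (H₁ ((x₁ ⊗ₜ x₂) ⊗ₜ x₃)))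
              ((TensorProduct.comm k A A) r) := by
      intro r
      induction r using TensorProduct.induction_on with
      | zero => simp
      | add r₁ r₂ ih₁ ih₂ => simp only [map_add, LinearMap.add_apply, add_mul, ih₁, ih₂]
      | tmul α β =>
        simp only [pp2_apply, LinearEquiv.coe_coe, TensorProduct.comm_tmul,
          TensorProduct.dualDistrib_apply, hH₁, hG₂, LinearMap.comp_apply,
          LinearMap.lcomp_apply, TensorProduct.lift.tmul, LinearMap.mk₂_apply,
          LinearMap.smul_apply, LinearMap.flip_apply, TensorProduct.mk_apply,
          qq2_apply, smul_eq_mul]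
        rw [hp.pair_antipode x₄ β]
        ring
    exact key2 (BA.comul a)
  exact LinearMap.congr_fun keymap _

end DeepBridges
end SkewPairAux

end SkewPairAux


/-- for a weak Hopf skew-pair `(X, A)` of perfect weak Hopf
algebras, `◁` makes `A` a right `X`-module which is a right
`X`-quasi-module-coalgebra, and `▷` makes `X` a left `A`-module which is a left
`A`-quasi-module-coalgebra. -/
theorem skewPair_quasiModuleCoalgebras
    {k : Type} [Field k] {X A : Type}
    [AddCommGroup X] [Module k X] [AddCommGroup A] [Module k A]
    (BX : BialgData k X) (BA : BialgData k A)
    (SX : X →ₗ[k] X) (SA SAinv : A →ₗ[k] A)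
    (hX : BX.IsBialgebra) (hA : BA.IsBialgebra)
    (hSX : BX.IsWeakAntipode SX) (hSA : BA.IsWeakAntipode SA)
    (hinv₁ : SAinv ∘ₗ SA = LinearMap.id) (hinv₂ : SA ∘ₗ SAinv = LinearMap.id)
    (hpX : BX.Perfect SX) (hpA : BA.Perfect SA)
    (p : X →ₗ[k] A →ₗ[k] k)
    (hp : IsWeakHopfSkewPair BX BA SX SAinv p) :
    (∀ (a : A) (x y : X),
      ract BA SAinv p (a ⊗ₜ BX.mul (x ⊗ₜ y))
        = ract BA SAinv p (ract BA SAinv p (a ⊗ₜ x) ⊗ₜ y)) ∧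
    (∀ a : A, ract BA SAinv p (a ⊗ₜ BX.one) = a) ∧
    (∀ (a : A) (x : X),
      BA.comul (ract BA SAinv p (a ⊗ₜ x))
        = (TensorProduct.map (ract BA SAinv p) (ract BA SAinv p))
            ((TensorProduct.tensorTensorTensorComm k A A X X)
              (BA.comul a ⊗ₜ BX.comul x))) ∧
    (∀ (a b : A) (x : X),
      lact BX SX p (BA.mul (a ⊗ₜ b) ⊗ₜ x)
        = lact BX SX p (a ⊗ₜ lact BX SX p (b ⊗ₜ x))) ∧
    (∀ x : X, lact BX SX p (BA.one ⊗ₜ x) = x) ∧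
    (∀ (a : A) (x : X),
      BX.comul (lact BX SX p (a ⊗ₜ x))
        = (TensorProduct.map (lact BX SX p) (lact BX SX p))
            ((TensorProduct.tensorTensorTensorComm k A A X X)
              (BA.comul a ⊗ₜ BX.comul x))) := by
  refine ⟨?_, ?_, ?_, ?_, ?_, ?_⟩
  · intro a x y
    apply SkewPairAux.pairing_inj1 p hp.nondegen_right
    intro u
    rw [SkewPairAux.bridge_R1 BX BA SX SAinv p hA hp u a (BX.mul (x ⊗ₜ y)),
      SkewPairAux.bridge_R1 BX BA SX SAinv p hA hp u (ract BA SAinv p (a ⊗ₜ x)) y,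
      SkewPairAux.bridge_R1 BX BA SX SAinv p hA hp (SkewPairAux.adX1 BX SX u y) a x,
      SkewPairAux.adX1_mul BX SX hX hpX u x y]
  · intro a
    apply SkewPairAux.pairing_inj1 p hp.nondegen_right
    intro u
    rw [SkewPairAux.bridge_R1 BX BA SX SAinv p hA hp u a BX.one,
      SkewPairAux.adX1_one BX SX hX hpX u]
  · intro a x
    apply SkewPairAux.pairing_inj2 p hp.nondegen_right
    intro u v
    rw [SkewPairAux.bridge_R3L BX BA SX SAinv p hA hp u v a x,
      SkewPairAux.bridge_R3R BX BA SX SAinv p hA hp u v a x,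
      SkewPairAux.main_X BX BA SX SA SAinv p hX hSX hpX hinv₁ hp u v]
  · intro a b x
    apply SkewPairAux.pairing_inj1 p.flip hp.nondegen_left
    intro c
    simp only [LinearMap.flip_apply]
    rw [SkewPairAux.bridge_R2 BX BA SX SAinv p hX hp c (BA.mul (a ⊗ₜ b)) x,
      SkewPairAux.bridge_R2 BX BA SX SAinv p hX hp c a (lact BX SX p (b ⊗ₜ x)),
      SkewPairAux.bridge_R2 BX BA SX SAinv p hX hp (SkewPairAux.Ua BA SAinv c a) b x,
      SkewPairAux.Ua_mul BA SA SAinv hA hpA hinv₁ hinv₂ c a b]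
  · intro x
    apply SkewPairAux.pairing_inj1 p.flip hp.nondegen_left
    intro c
    simp only [LinearMap.flip_apply]
    rw [SkewPairAux.bridge_R2 BX BA SX SAinv p hX hp c BA.one x,
      SkewPairAux.Ua_one BA SA SAinv hA hpA hinv₁ c]
  · intro a x
    apply SkewPairAux.pairing_inj2 p.flip hp.nondegen_left
    intro b c
    rw [SkewPairAux.bridge_R6L BX BA SX SAinv p hX hp b c a x,
      SkewPairAux.bridge_R6R BX BA SX SAinv p hX hp b c a x,
      SkewPairAux.main_A BA SA SAinv hA hSA hpA hinv₁ hinv₂ b c]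
end
end
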